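/- arXiv:1604.03347 — 3 statements merged into one kernel-verified Lean document; each statement's English description precedes it below -/
import Mathlib

section
/- For every prime p, the number of medial quasigroups that admit an affine form over the cyclic group Z_{p^2}, counted up to isomorphism, is exactly p^4 - p^3 - 2p. -/
/-- A binary operation is a quasigroup operation if all left and right
translations are bijective. -/
def IsQuasigroup {Q : Type*} (op : Q → Q → Q) : Prop :=
  (∀ a : Q, Function.Bijective fun x => op a x) ∧
  (∀ a : Q, Function.Bijective fun x => op x a)

/-- The medial law. -/
def IsMedial {Q : Type*} (op : Q → Q → Q) : Prop :=
  ∀ x y u v : Q, op (op x y) (op u v) = op (op x u) (op y v)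

/-- A quasigroup `(Q, op)` admits an affine form over an abelian group `G` if,
after identifying `Q` with `G` via a bijection, the operation is
`x * y = φ(x) + ψ(y) + c` for automorphisms `φ, ψ` of `G` and `c ∈ G`. -/
def AdmitsAffineForm {Q : Type*} (op : Q → Q → Q) (G : Type*) [AddCommGroup G] : Prop :=
  ∃ (e : Q ≃ G) (φ ψ : G ≃+ G) (c : G),
    ∀ x y : Q, e (op x y) = φ (e x) + ψ (e y) + c

/-- Isomorphism of binary structures (quasigroups). -/
def QuasigroupIso {Q₁ Q₂ : Type*} (op₁ : Q₁ → Q₁ → Q₁) (op₂ : Q₂ → Q₂ → Q₂) : Prop :=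
  ∃ f : Q₁ ≃ Q₂, ∀ x y : Q₁, f (op₁ x y) = op₂ (f x) (f y)

/-- `mqG G` : the number of medial quasigroups admitting an affine form over the
abelian group `G`, up to isomorphism. -/
noncomputable def mqG (G : Type*) [AddCommGroup G] : ℕ :=
  Nat.card (Quot fun
    (op₁ op₂ : {op : G → G → G // IsQuasigroup op ∧ IsMedial op ∧ AdmitsAffineForm op G}) =>
    QuasigroupIso op₁.1 op₂.1)

/-- `mqN n` : the number of medial quasigroups of order `n`, up to isomorphism. -/
noncomputable def mqN (n : ℕ) : ℕ :=
  Nat.card (Quot fun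
    (op₁ op₂ : {op : Fin n → Fin n → Fin n // IsQuasigroup op ∧ IsMedial op}) =>
    QuasigroupIso op₁.1 op₂.1)

namespace MQ

variable {n : ℕ} [NeZero n]

/-- the affine operation -/
def aop (a b : (ZMod n)ˣ) (c : ZMod n) : ZMod n → ZMod n → ZMod n :=
  fun x y => a * x + b * y + c

/-- multiplication by a unit as an additive automorphism -/
def mulAut (a : (ZMod n)ˣ) : ZMod n ≃+ ZMod n where
  toFun x := a * x
  invFun x := (a⁻¹ : (ZMod n)ˣ) * x
  left_inv x := by simp [Units.inv_mul_cancel_left]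
  right_inv x := by simp [Units.mul_inv_cancel_left]
  map_add' x y := mul_add _ _ _

lemma aop_quasigroup (a b : (ZMod n)ˣ) (c : ZMod n) : IsQuasigroup (aop a b c) := by
  constructor
  · intro e
    have : (fun x : ZMod n => aop a b c e x) = fun x => (b : ZMod n) * x + (a * e + c) := by
      funext x; simp [aop]; ring
    rw [this]
    exact (Equiv.trans (mulAut b).toEquiv (Equiv.addRight ((a : ZMod n) * e + c))).bijective
  · intro e
    have : (fun x : ZMod n => aop a b c x e) = fun x => (a : ZMod n) * x + (b * e + c) := by
      funext x; simp [aop]; ring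
    rw [this]
    exact (Equiv.trans (mulAut a).toEquiv (Equiv.addRight ((b : ZMod n) * e + c))).bijective

lemma aop_medial (a b : (ZMod n)ˣ) (c : ZMod n) : IsMedial (aop a b c) := by
  intro x y u v; simp only [aop]; ring

lemma aop_admits (a b : (ZMod n)ˣ) (c : ZMod n) : AdmitsAffineForm (aop a b c) (ZMod n) :=
  ⟨Equiv.refl _, mulAut a, mulAut b, c, fun x y => rfl⟩

/-- an additive self-map of ZMod n is multiplication -/
lemma add_hom_eq_mul (g : ZMod n → ZMod n) (hg : ∀ x y, g (x + y) = g x + g y) :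
    ∀ x, g x = g 1 * x := by
  intro x
  have h0 : g = (AddMonoidHom.mk' g hg : ZMod n →+ ZMod n) := rfl
  have h1 : g x = g (x.val • (1 : ZMod n)) := by
    rw [nsmul_eq_mul, mul_one, ZMod.natCast_rightInverse x]
  rw [h1, h0, map_nsmul, nsmul_eq_mul, ZMod.natCast_rightInverse x, mul_comm]

lemma addequiv_eq_mul (φ : ZMod n ≃+ ZMod n) : ∀ x, φ x = φ 1 * x :=
  add_hom_eq_mul φ (map_add φ)

lemma addequiv_unit (φ : ZMod n ≃+ ZMod n) : IsUnit (φ 1) := by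
  have h : φ (φ.symm 1) = 1 := φ.apply_symm_apply 1
  rw [addequiv_eq_mul φ] at h
  exact IsUnit.of_mul_eq_one _ h

/-- key step: a quasigroup isomorphism between affine operations is affine -/
lemma iso_affine (a₁ b₁ a₂ b₂ : (ZMod n)ˣ) (c₁ c₂ : ZMod n) (f : ZMod n ≃ ZMod n)
    (hf : ∀ x y, f (aop a₁ b₁ c₁ x y) = aop a₂ b₂ c₂ (f x) (f y)) :
    ∃ (u : (ZMod n)ˣ) (d : ZMod n), ∀ x, f x = u * x + d := by
  simp only [aop] at hf
  -- quasiadditivity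
  have key : ∀ x y, f (x + y - c₁) = f x + f y - f c₁ := by
    intro x y
    have e1 := hf ((a₁⁻¹ : (ZMod n)ˣ) * (x - c₁)) ((b₁⁻¹ : (ZMod n)ˣ) * (y - c₁))
    have e2 := hf ((a₁⁻¹ : (ZMod n)ˣ) * (x - c₁)) 0
    have e3 := hf 0 ((b₁⁻¹ : (ZMod n)ˣ) * (y - c₁))
    have e4 := hf 0 0
    rw [Units.mul_inv_cancel_left] at e1 e2 e3
    rw [Units.mul_inv_cancel_left] at e1
    have harg1 : x - c₁ + (y - c₁) + c₁ = x + y - c₁ := by ring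
    have harg2 : x - c₁ + (b₁ : ZMod n) * 0 + c₁ = x := by ring
    have harg3 : (a₁ : ZMod n) * 0 + (y - c₁) + c₁ = y := by ring
    have harg4 : (a₁ : ZMod n) * 0 + (b₁ : ZMod n) * 0 + c₁ = c₁ := by ring
    rw [harg1] at e1
    rw [harg2] at e2
    rw [harg3] at e3
    rw [harg4] at e4
    rw [e1, e2, e3, e4]; ring
  -- θ is additive
  set θ : ZMod n → ZMod n := fun x => f (x + c₁) - f c₁ with hθ
  have θadd : ∀ x y, θ (x + y) = θ x + θ y := by
    intro x y
    have := key (x + c₁) (y + c₁)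
    have harg : x + c₁ + (y + c₁) - c₁ = x + y + c₁ := by ring
    rw [harg] at this
    simp only [hθ]; rw [this]; ring
  have θmul : ∀ x, θ x = θ 1 * x := add_hom_eq_mul θ θadd
  -- θ 1 is a unit
  have θbij : Function.Bijective θ := by
    have : θ = (fun z => z - f c₁) ∘ f ∘ (fun x => x + c₁) := rfl
    rw [this]
    exact ((Equiv.subRight (f c₁)).bijective.comp f.bijective).comp (Equiv.addRight c₁).bijective
  obtain ⟨v, hv⟩ := θbij.surjective 1
  rw [θmul] at hv
  have hu : IsUnit (θ 1) := IsUnit.of_mul_eq_one _ hv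
  refine ⟨hu.unit, f c₁ - θ 1 * c₁, fun x => ?_⟩
  have : f x = θ (x - c₁) + f c₁ := by simp only [hθ]; ring_nf
  rw [this, θmul, IsUnit.unit_spec]; ring


/-! ### Section 2: triples and the quotient equivalence -/

lemma qiso_refl {Q : Type*} (op : Q → Q → Q) : QuasigroupIso op op :=
  ⟨Equiv.refl Q, fun _ _ => rfl⟩

lemma qiso_symm {Q₁ Q₂ : Type*} {op₁ : Q₁ → Q₁ → Q₁} {op₂ : Q₂ → Q₂ → Q₂}
    (h : QuasigroupIso op₁ op₂) : QuasigroupIso op₂ op₁ := by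
  obtain ⟨f, hf⟩ := h
  refine ⟨f.symm, fun x y => f.injective ?_⟩
  rw [hf, f.apply_symm_apply, f.apply_symm_apply, f.apply_symm_apply]

lemma qiso_trans {Q₁ Q₂ Q₃ : Type*} {op₁ : Q₁ → Q₁ → Q₁} {op₂ : Q₂ → Q₂ → Q₂}
    {op₃ : Q₃ → Q₃ → Q₃} (h : QuasigroupIso op₁ op₂) (h' : QuasigroupIso op₂ op₃) :
    QuasigroupIso op₁ op₃ := by
  obtain ⟨f, hf⟩ := h; obtain ⟨g, hg⟩ := h'
  exact ⟨f.trans g, fun x y => by simp [hf, hg]⟩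

/-- the parameter space -/
abbrev T (n : ℕ) := (ZMod n)ˣ × (ZMod n)ˣ × ZMod n

/-- the equivalence on parameters -/
def rel (t t' : T n) : Prop :=
  t.1 = t'.1 ∧ t.2.1 = t'.2.1 ∧
    ∃ (u : (ZMod n)ˣ) (d : ZMod n),
      t'.2.2 = u * t.2.2 + (1 - (t.1 : ZMod n) - (t.2.1 : ZMod n)) * d

/-- the subtype of operations -/
abbrev OpS (n : ℕ) :=
  {op : ZMod n → ZMod n → ZMod n //
    IsQuasigroup op ∧ IsMedial op ∧ AdmitsAffineForm op (ZMod n)}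

def toOp (t : T n) : OpS n :=
  ⟨aop t.1 t.2.1 t.2.2, aop_quasigroup _ _ _, aop_medial _ _ _, aop_admits _ _ _⟩

/-- easy direction : related parameters give isomorphic quasigroups -/
lemma rel_to_iso {t t' : T n} (h : rel t t') : QuasigroupIso (toOp t).1 (toOp t').1 := by
  obtain ⟨a, b, c⟩ := t
  obtain ⟨a', b', c'⟩ := t'
  obtain ⟨ha, hb, u, d, hc⟩ := h
  simp only at ha hb hc
  subst ha; subst hb
  refine ⟨(mulAut u).toEquiv.trans (Equiv.addRight d), fun x y => ?_⟩
  simp only [toOp, aop, Equiv.trans_apply, AddEquiv.coe_toEquiv, Equiv.coe_addRight]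
  show (u : ZMod n) * (a * x + b * y + c) + d = a * ((u : ZMod n) * x + d) + b * ((u:ZMod n) * y + d) + c'
  rw [hc]; ring

/-- hard direction : isomorphic affine operations have related parameters -/
lemma iso_to_rel {t t' : T n} (h : QuasigroupIso (toOp t).1 (toOp t').1) : rel t t' := by
  obtain ⟨a, b, c⟩ := t
  obtain ⟨a', b', c'⟩ := t'
  obtain ⟨f, hf⟩ := h
  obtain ⟨u, d, hu⟩ := iso_affine a b a' b' c c' f hf
  simp only [toOp, aop] at hf
  have h00 := hf 0 0
  have h10 := hf 1 0
  have h01 := hf 0 1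
  simp only [hu] at h00 h10 h01
  simp only [mul_zero, mul_one, zero_add, add_zero] at h00 h10 h01
  -- h00 : u * c + d = a' * (u * 0 + d) + b' * (u * 0 + d) + c' etc
  have ha : (a : ZMod n) = a' := by
    have : (u : ZMod n) * a = a' * u := by linear_combination h10 - h00
    have h2 : ((u⁻¹ : (ZMod n)ˣ) : ZMod n) * ((u : ZMod n) * (a : ZMod n)) =
        ((u⁻¹ : (ZMod n)ˣ) : ZMod n) * ((a' : ZMod n) * u) := by rw [this]
    rw [Units.inv_mul_cancel_left] at h2
    rw [h2]; rw [mul_comm (a' : ZMod n) (u : ZMod n), Units.inv_mul_cancel_left]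
  have hb : (b : ZMod n) = b' := by
    have : (u : ZMod n) * b = b' * u := by linear_combination h01 - h00
    have h2 : ((u⁻¹ : (ZMod n)ˣ) : ZMod n) * ((u : ZMod n) * (b : ZMod n)) =
        ((u⁻¹ : (ZMod n)ˣ) : ZMod n) * ((b' : ZMod n) * u) := by rw [this]
    rw [Units.inv_mul_cancel_left] at h2
    rw [h2]; rw [mul_comm (b' : ZMod n) (u : ZMod n), Units.inv_mul_cancel_left]
  refine ⟨Units.ext ha, Units.ext hb, u, d, ?_⟩
  simp only
  rw [← ha, ← hb] at h00
  linear_combination -h00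

/-- every medial quasigroup with affine form over ZMod n is isomorphic to some aop -/
lemma exists_triple (o : OpS n) : ∃ t : T n, QuasigroupIso o.1 (toOp t).1 := by
  obtain ⟨e, φ, ψ, c, he⟩ := o.2.2.2
  refine ⟨((addequiv_unit φ).unit, (addequiv_unit ψ).unit, c), e, fun x y => ?_⟩
  rw [he]
  simp only [toOp, aop, IsUnit.unit_spec]
  rw [addequiv_eq_mul φ (e x), addequiv_eq_mul ψ (e y)]

noncomputable def chooseT (o : OpS n) : T n := (exists_triple o).choose

lemma chooseT_spec (o : OpS n) : QuasigroupIso o.1 (toOp (chooseT o)).1 :=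
  (exists_triple o).choose_spec

/-- the quotient equivalence -/
noncomputable def quotEquiv (n : ℕ) [NeZero n] :
    Quot (fun t t' : T n => rel t t') ≃
      Quot (fun o o' : OpS n => QuasigroupIso o.1 o'.1) where
  toFun := Quot.lift (fun t => Quot.mk _ (toOp t))
    (fun t t' h => Quot.sound (rel_to_iso h))
  invFun := Quot.lift (fun o => Quot.mk _ (chooseT o))
    (fun o o' h => Quot.sound (iso_to_rel
      (qiso_trans (qiso_trans (qiso_symm (chooseT_spec o)) h) (chooseT_spec o'))))
  left_inv := by
    apply Quot.ind
    intro t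
    exact Quot.sound (iso_to_rel (qiso_symm (chooseT_spec (toOp t))))
  right_inv := by
    apply Quot.ind
    intro o
    exact Quot.sound (qiso_symm (chooseT_spec o))


/-! ### Section 3: fiber decomposition -/

/-- the relation on constants, for a fixed `s = 1 - a - b` -/
def relc (s : ZMod n) (c c' : ZMod n) : Prop :=
  ∃ (u : (ZMod n)ˣ) (d : ZMod n), c' = u * c + s * d

noncomputable def fiberEquiv (n : ℕ) [NeZero n] :
    Quot (fun t t' : T n => rel t t') ≃
      Σ ab : (ZMod n)ˣ × (ZMod n)ˣ,
        Quot (relc (1 - (ab.1 : ZMod n) - (ab.2 : ZMod n))) where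
  toFun := Quot.lift
    (fun t => ⟨(t.1, t.2.1), Quot.mk _ t.2.2⟩)
    (by
      rintro ⟨a, b, c⟩ ⟨a', b', c'⟩ ⟨ha, hb, u, d, hc⟩
      simp only at ha hb hc
      subst ha; subst hb
      exact congrArg _ (Quot.sound ⟨u, d, hc⟩))
  invFun := fun x => Quot.lift
    (fun c => Quot.mk _ ((x.1.1, x.1.2, c) : T n))
    (fun c c' h => Quot.sound ⟨rfl, rfl, h⟩) x.2
  left_inv := by
    apply Quot.ind
    rintro ⟨a, b, c⟩
    rfl
  right_inv := by
    rintro ⟨⟨a, b⟩, q⟩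
    induction q using Quot.ind with
    | _ c => rfl

lemma card_quot_rel (n : ℕ) [NeZero n] :
    Nat.card (Quot (fun t t' : T n => rel t t')) =
      ∑ ab : (ZMod n)ˣ × (ZMod n)ˣ,
        Nat.card (Quot (relc (1 - (ab.1 : ZMod n) - (ab.2 : ZMod n)))) := by
  classical
  rw [Nat.card_congr (fiberEquiv n)]
  letI : ∀ ab : (ZMod n)ˣ × (ZMod n)ˣ,
      Fintype (Quot (relc (1 - (ab.1 : ZMod n) - (ab.2 : ZMod n)))) :=
    fun ab => Fintype.ofFinite _
  rw [Nat.card_eq_fintype_card, Fintype.card_sigma]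
  exact Finset.sum_congr rfl (fun ab _ => (Nat.card_eq_fintype_card).symm)

/-! ### Section 4 : structure of `ZMod (p^2)` -/

section Psq

variable {p : ℕ} [hp : Fact p.Prime]

instance np2 : NeZero (p ^ 2) := ⟨pow_ne_zero 2 hp.out.ne_zero⟩

/-- reduction mod p -/
def pi (p : ℕ) [Fact p.Prime] : ZMod (p ^ 2) →+* ZMod p :=
  ZMod.castHom (dvd_pow_self p two_ne_zero) (ZMod p)

lemma pi_zero_iff (x : ZMod (p ^ 2)) : pi p x = 0 ↔ (p : ZMod (p ^ 2)) ∣ x := by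
  constructor
  · intro h
    have h1 : pi p x = ((x.val : ℕ) : ZMod p) := by
      rw [pi, ZMod.castHom_apply, ZMod.cast_eq_val]
    rw [h1] at h
    obtain ⟨k, hk⟩ := (ZMod.natCast_eq_zero_iff x.val p).mp h
    refine ⟨(k : ZMod (p ^ 2)), ?_⟩
    rw [← ZMod.natCast_rightInverse x, hk]
    push_cast
    ring
  · rintro ⟨y, rfl⟩
    rw [map_mul, map_natCast, ZMod.natCast_self, zero_mul]

lemma isUnit_iff_pi (x : ZMod (p ^ 2)) : IsUnit x ↔ pi p x ≠ 0 := by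
  have hval : ((x.val : ℕ) : ZMod (p ^ 2)) = x := ZMod.natCast_rightInverse x
  have h1 : pi p x = ((x.val : ℕ) : ZMod p) := by
    rw [pi, ZMod.castHom_apply, ZMod.cast_eq_val]
  have h2 : IsUnit x ↔ Nat.Coprime x.val (p ^ 2) := by
    conv_lhs => rw [← hval]
    exact ZMod.isUnit_iff_coprime x.val (p ^ 2)
  have h3 : pi p x = 0 ↔ p ∣ x.val := by
    rw [h1, ZMod.natCast_eq_zero_iff]
  rw [h2, Ne, h3]
  constructor
  · intro hco hdvd
    have hd2 := Nat.dvd_gcd hdvd (dvd_pow_self p two_ne_zero)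
    rw [Nat.Coprime] at hco
    rw [hco] at hd2
    exact hp.out.ne_one (Nat.dvd_one.mp hd2)
  · intro h
    exact ((hp.out.coprime_iff_not_dvd).mpr h).symm.pow_right 2

lemma not_isUnit_iff_dvd (x : ZMod (p ^ 2)) : ¬ IsUnit x ↔ (p : ZMod (p ^ 2)) ∣ x := by
  rw [isUnit_iff_pi, not_not, pi_zero_iff]

lemma p_ne_zero' : (p : ZMod (p ^ 2)) ≠ 0 := by
  rw [Ne, ZMod.natCast_eq_zero_iff]
  intro h
  have h2 := Nat.le_of_dvd hp.out.pos h
  have h3 := hp.out.two_le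
  nlinarith

lemma p_not_unit : ¬ IsUnit ((p : ZMod (p ^ 2))) := by
  rw [not_isUnit_iff_dvd]

lemma exists_unit_mul (x : ZMod (p ^ 2)) (hx : x ≠ 0) (hdvd : (p : ZMod (p ^ 2)) ∣ x) :
    ∃ v : (ZMod (p ^ 2))ˣ, x = (p : ZMod (p ^ 2)) * (v : ZMod (p ^ 2)) := by
  obtain ⟨y, rfl⟩ := hdvd
  by_cases hy : IsUnit y
  · obtain ⟨v, rfl⟩ := hy
    exact ⟨v, rfl⟩
  · exfalso
    rw [not_isUnit_iff_dvd] at hy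
    obtain ⟨z, rfl⟩ := hy
    apply hx
    rw [← mul_assoc]
    have : (p : ZMod (p ^ 2)) * (p : ZMod (p ^ 2)) = ((p ^ 2 : ℕ) : ZMod (p ^ 2)) := by
      push_cast; ring
    rw [this, ZMod.natCast_self, zero_mul]

end Psq


/-! ### Section 4b : cardinality of each fiber -/

section Cards

variable {p : ℕ} [hp : Fact p.Prime]

lemma relc_refl (s c : ZMod (p ^ 2)) : relc s c c := ⟨1, 0, by simp⟩

lemma card_relc_unit {s : ZMod (p ^ 2)} (hs : IsUnit s) :
    Nat.card (Quot (relc s)) = 1 := by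
  obtain ⟨w, rfl⟩ := hs
  have hall : ∀ q : Quot (relc (w : ZMod (p ^ 2))), q = Quot.mk _ 0 := by
    apply Quot.ind
    intro c
    refine Quot.sound ⟨1, (w⁻¹ : (ZMod (p ^ 2))ˣ) * (-c), ?_⟩
    rw [Units.mul_inv_cancel_left]
    simp
  haveI : Subsingleton (Quot (relc (w : ZMod (p ^ 2)))) :=
    ⟨fun a b => (hall a).trans (hall b).symm⟩
  haveI : Unique (Quot (relc (w : ZMod (p ^ 2)))) := uniqueOfSubsingleton (Quot.mk _ 0)
  exact Nat.card_unique

lemma one_lt_psq : 1 < p ^ 2 := by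
  have := hp.out.two_le
  nlinarith

lemma card_relc_zero : Nat.card (Quot (relc (0 : ZMod (p ^ 2)))) = 3 := by
  classical
  haveI : Fact (1 < p ^ 2) := ⟨one_lt_psq⟩
  set ν : ZMod (p ^ 2) → Fin 3 :=
    fun c => if c = 0 then 0 else if IsUnit c then 1 else 2 with hν
  have hwd : ∀ c c', relc 0 c c' → ν c = ν c' := by
    rintro c c' ⟨u, d, rfl⟩
    rw [zero_mul, add_zero]
    have hz : ((u : ZMod (p ^ 2)) * c = 0) ↔ c = 0 := by
      constructor
      · intro h
        have := congrArg (fun z => ((u⁻¹ : (ZMod (p ^ 2))ˣ) : ZMod (p ^ 2)) * z) h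
        simpa [Units.inv_mul_cancel_left] using this
      · intro h; rw [h, mul_zero]
    have hu : IsUnit ((u : ZMod (p ^ 2)) * c) ↔ IsUnit c := by
      rw [isUnit_iff_pi, isUnit_iff_pi, map_mul]
      have hup : IsUnit (pi p (u : ZMod (p ^ 2))) := u.isUnit.map (pi p)
      rw [Ne, Ne, hup.mul_right_eq_zero]
    simp [hν, hz, hu]
  have hinj : ∀ c c', ν c = ν c' → relc 0 c c' := by
    intro c c' h
    simp only [hν] at h
    by_cases h0 : c = 0 <;> by_cases h0' : c' = 0
    · subst h0; subst h0'; exact relc_refl _ _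
    · rw [if_pos h0, if_neg h0'] at h
      by_cases hu' : IsUnit c'
      · rw [if_pos hu'] at h; exact absurd h (by decide)
      · rw [if_neg hu'] at h; exact absurd h (by decide)
    · rw [if_neg h0, if_pos h0'] at h
      by_cases hu : IsUnit c
      · rw [if_pos hu] at h; exact absurd h (by decide)
      · rw [if_neg hu] at h; exact absurd h (by decide)
    · rw [if_neg h0, if_neg h0'] at h
      by_cases hu : IsUnit c <;> by_cases hu' : IsUnit c'
      · obtain ⟨U, rfl⟩ := hu
        obtain ⟨U', rfl⟩ := hu'
        refine ⟨U' * U⁻¹, 0, ?_⟩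
        have key : (↑(U' * U⁻¹) : ZMod (p ^ 2)) * ↑U = ↑U' := by
          rw [← Units.val_mul, inv_mul_cancel_right]
        linear_combination - key
      · rw [if_pos hu, if_neg hu'] at h; exact absurd h (by decide)
      · rw [if_neg hu, if_pos hu'] at h; exact absurd h (by decide)
      · obtain ⟨v, hv⟩ := exists_unit_mul c h0 ((not_isUnit_iff_dvd c).mp hu)
        obtain ⟨v', hv'⟩ := exists_unit_mul c' h0' ((not_isUnit_iff_dvd c').mp hu')
        refine ⟨v' * v⁻¹, 0, ?_⟩
        have key : (↑(v' * v⁻¹) : ZMod (p ^ 2)) * ↑v = ↑v' := by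
          rw [← Units.val_mul, inv_mul_cancel_right]
        rw [hv, hv']
        linear_combination - (p : ZMod (p ^ 2)) * key
  have hsurj : Function.Surjective (Quot.lift ν hwd) := by
    intro z
    fin_cases z
    · exact ⟨Quot.mk _ 0, by simp [hν]⟩
    · refine ⟨Quot.mk _ 1, ?_⟩
      show ν 1 = 1
      simp only [hν]
      rw [if_neg (one_ne_zero), if_pos isUnit_one]
    · refine ⟨Quot.mk _ ((p : ZMod (p ^ 2))), ?_⟩
      show ν (p : ZMod (p ^ 2)) = 2
      simp only [hν]
      rw [if_neg p_ne_zero', if_neg p_not_unit]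
  have hinj' : Function.Injective (Quot.lift ν hwd) := by
    intro q q' h
    induction q using Quot.ind with
    | _ c =>
    induction q' using Quot.ind with
    | _ c' =>
    exact Quot.sound (hinj c c' h)
  rw [Nat.card_congr (Equiv.ofBijective _ ⟨hinj', hsurj⟩), Nat.card_eq_fintype_card,
    Fintype.card_fin]

lemma card_relc_pdvd {s : ZMod (p ^ 2)} (hs0 : s ≠ 0) (hdvd : (p : ZMod (p ^ 2)) ∣ s) :
    Nat.card (Quot (relc s)) = 2 := by
  classical
  haveI : Fact (1 < p) := ⟨hp.out.one_lt⟩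
  obtain ⟨w, hsw⟩ := exists_unit_mul s hs0 hdvd
  set ν : ZMod (p ^ 2) → Fin 2 := fun c => if pi p c = 0 then 0 else 1 with hν
  have hps : pi p s = 0 := (pi_zero_iff s).2 hdvd
  have hwd : ∀ c c', relc s c c' → ν c = ν c' := by
    rintro c c' ⟨u, d, rfl⟩
    have hc' : pi p ((u : ZMod (p ^ 2)) * c + s * d) = pi p (u : ZMod (p ^ 2)) * pi p c := by
      rw [map_add, map_mul, map_mul, hps, zero_mul, add_zero]
    have hzz : (pi p ((u : ZMod (p ^ 2)) * c + s * d) = 0) ↔ pi p c = 0 := by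
      rw [hc']
      exact (u.isUnit.map (pi p)).mul_right_eq_zero
    simp only [hν]
    simp only [hzz]
  have hinj : ∀ c c', ν c = ν c' → relc s c c' := by
    intro c c' h
    simp only [hν] at h
    by_cases h0 : pi p c = 0 <;> by_cases h0' : pi p c' = 0
    · obtain ⟨e, rfl⟩ := (pi_zero_iff c).1 h0
      obtain ⟨e', rfl⟩ := (pi_zero_iff c').1 h0'
      refine ⟨1, (w⁻¹ : (ZMod (p ^ 2))ˣ) * (e' - e), ?_⟩
      rw [hsw]
      simp only [Units.val_one, one_mul]
      have key : (w : ZMod (p ^ 2)) * ((w⁻¹ : (ZMod (p ^ 2))ˣ) * (e' - e)) = e' - e :=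
        Units.mul_inv_cancel_left _ _
      linear_combination - (p : ZMod (p ^ 2)) * key
    · rw [if_pos h0, if_neg h0'] at h; exact absurd h (by decide)
    · rw [if_neg h0, if_pos h0'] at h; exact absurd h (by decide)
    · obtain ⟨U, rfl⟩ := (isUnit_iff_pi c).2 h0
      obtain ⟨U', rfl⟩ := (isUnit_iff_pi c').2 h0'
      refine ⟨U' * U⁻¹, 0, ?_⟩
      have key : (↑(U' * U⁻¹) : ZMod (p ^ 2)) * ↑U = ↑U' := by
        rw [← Units.val_mul, inv_mul_cancel_right]
      linear_combination - key
  have hsurj : Function.Surjective (Quot.lift ν hwd) := by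
    intro z
    fin_cases z
    · refine ⟨Quot.mk _ 0, ?_⟩
      show ν 0 = 0
      simp only [hν]
      rw [if_pos (map_zero _)]
    · refine ⟨Quot.mk _ 1, ?_⟩
      show ν 1 = 1
      simp only [hν]
      rw [if_neg (by rw [map_one]; exact one_ne_zero)]
  have hinj' : Function.Injective (Quot.lift ν hwd) := by
    intro q q' h
    induction q using Quot.ind with
    | _ c =>
    induction q' using Quot.ind with
    | _ c' =>
    exact Quot.sound (hinj c c' h)
  rw [Nat.card_congr (Equiv.ofBijective _ ⟨hinj', hsurj⟩), Nat.card_eq_fintype_card,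
    Fintype.card_fin]

open scoped Classical in
lemma card_fiber (s : ZMod (p ^ 2)) :
    Nat.card (Quot (relc s)) =
      if s = 0 then 3 else if (p : ZMod (p ^ 2)) ∣ s then 2 else 1 := by
  split_ifs with h1 h2
  · subst h1; exact card_relc_zero
  · exact card_relc_pdvd h1 h2
  · refine card_relc_unit ((isUnit_iff_pi s).2 ?_)
    exact fun h => h2 ((pi_zero_iff s).1 h)

end Cards


/-! ### Section 5 : counting -/

section Count

open scoped Classical

variable {p : ℕ} [hp : Fact p.Prime]

lemma nezero_p : NeZero p := ⟨hp.out.ne_zero⟩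

/-- the product decomposition of `ZMod (p^2)` -/
noncomputable def E (p : ℕ) [hp : Fact p.Prime] : ZMod p × ZMod p ≃ ZMod (p ^ 2) := by
  haveI : NeZero p := nezero_p
  refine Equiv.ofBijective (fun yz => ((yz.1.val + p * yz.2.val : ℕ) : ZMod (p ^ 2))) ?_
  rw [Fintype.bijective_iff_injective_and_card]
  constructor
  · rintro ⟨a1, b1⟩ ⟨a2, b2⟩ h
    have ha1 := ZMod.val_lt a1
    have ha2 := ZMod.val_lt a2
    have hb1 := ZMod.val_lt b1
    have hb2 := ZMod.val_lt b2
    have hlt1 : a1.val + p * b1.val < p ^ 2 := by nlinarith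
    have hlt2 : a2.val + p * b2.val < p ^ 2 := by nlinarith
    have h2 := congrArg ZMod.val h
    simp only at h2
    rw [ZMod.val_cast_of_lt hlt1, ZMod.val_cast_of_lt hlt2] at h2
    have hmod := congrArg (· % p) h2
    simp only [Nat.add_mul_mod_self_left] at hmod
    rw [Nat.mod_eq_of_lt ha1, Nat.mod_eq_of_lt ha2] at hmod
    have hb : b1.val = b2.val := by
      have hpos := hp.out.pos
      have : p * b1.val = p * b2.val := by omega
      exact Nat.eq_of_mul_eq_mul_left hpos this
    have e1 : a1 = a2 := ZMod.val_injective p hmod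
    have e2 : b1 = b2 := ZMod.val_injective p hb
    rw [e1, e2]
  · rw [Fintype.card_prod, ZMod.card, ZMod.card]
    ring

lemma pi_E (yz : ZMod p × ZMod p) : pi p (E p yz) = yz.1 := by
  haveI : NeZero p := nezero_p
  show pi p ((yz.1.val + p * yz.2.val : ℕ) : ZMod (p ^ 2)) = yz.1
  rw [map_natCast]
  push_cast
  rw [ZMod.natCast_self, ZMod.natCast_rightInverse yz.1]
  ring

/-- counting elements of `ZMod (p^2)` by their reduction -/
lemma count_pi (P : ZMod p → Prop) :
    Nat.card {x : ZMod (p ^ 2) // P (pi p x)} = p * Nat.card {y : ZMod p // P y} := by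
  haveI : NeZero p := nezero_p
  have e1 : {yz : ZMod p × ZMod p // P yz.1} ≃ {x : ZMod (p ^ 2) // P (pi p x)} :=
    Equiv.subtypeEquiv (E p) (fun yz => by rw [pi_E])
  have e2 : {yz : ZMod p × ZMod p // P yz.1} ≃ {y : ZMod p // P y} × ZMod p :=
    { toFun := fun x => (⟨x.1.1, x.2⟩, x.1.2)
      invFun := fun yz => ⟨(yz.1.1, yz.2), yz.1.2⟩
      left_inv := fun x => rfl
      right_inv := fun yz => rfl }
  rw [← Nat.card_congr e1, Nat.card_congr e2, Nat.card_prod, Nat.card_zmod]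
  ring

lemma count_ne01 : Nat.card {y : ZMod p // y ≠ 0 ∧ y ≠ 1} = p - 2 := by
  haveI : NeZero p := nezero_p
  haveI : Fact (1 < p) := ⟨hp.out.one_lt⟩
  rw [Nat.card_eq_fintype_card, Fintype.card_subtype]
  have hfe : Finset.univ.filter (fun y : ZMod p => y ≠ 0 ∧ y ≠ 1) =
      Finset.univ \ ({0, 1} : Finset (ZMod p)) := by
    ext z
    simp [and_comm]
  rw [hfe, Finset.card_sdiff_of_subset (Finset.subset_univ _), Finset.card_univ, ZMod.card,
    Finset.card_insert_of_notMem (by simp), Finset.card_singleton]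

/-- subtype-of-units equivalence -/
noncomputable def unitsSub (Φ : ZMod (p ^ 2) → Prop) :
    {a : (ZMod (p ^ 2))ˣ // Φ (a : ZMod (p ^ 2))} ≃ {x : ZMod (p ^ 2) // IsUnit x ∧ Φ x} where
  toFun a := ⟨(a.1 : ZMod (p ^ 2)), a.1.isUnit, a.2⟩
  invFun x := ⟨x.2.1.unit, by rw [IsUnit.unit_spec]; exact x.2.2⟩
  left_inv a := Subtype.ext (Units.ext ((a.1.isUnit).unit_spec))
  right_inv x := Subtype.ext (x.2.1.unit_spec)

lemma count_units_fiber (y : ZMod p) (hy : y ≠ 0) :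
    Nat.card {b : (ZMod (p ^ 2))ˣ // pi p (b : ZMod (p ^ 2)) = y} = p := by
  rw [Nat.card_congr (unitsSub (fun x => pi p x = y))]
  have e3 : {x : ZMod (p ^ 2) // IsUnit x ∧ pi p x = y} ≃ {x : ZMod (p ^ 2) // pi p x = y} :=
    Equiv.subtypeEquivRight (fun x => by
      rw [isUnit_iff_pi]
      constructor
      · exact fun h => h.2
      · exact fun h => ⟨by rw [h]; exact hy, h⟩)
  rw [Nat.card_congr e3, count_pi (fun z => z = y)]
  haveI : Unique {z : ZMod p // z = y} :=
    ⟨⟨⟨y, rfl⟩⟩, fun z => Subtype.ext z.2⟩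
  rw [Nat.card_unique, mul_one]

lemma count_pairs_zero :
    Nat.card {ab : (ZMod (p ^ 2))ˣ × (ZMod (p ^ 2))ˣ //
        (1 : ZMod (p ^ 2)) - (ab.1 : ZMod (p ^ 2)) - (ab.2 : ZMod (p ^ 2)) = 0} =
      p * (p - 2) := by
  have e1 : {ab : (ZMod (p ^ 2))ˣ × (ZMod (p ^ 2))ˣ //
        (1 : ZMod (p ^ 2)) - (ab.1 : ZMod (p ^ 2)) - (ab.2 : ZMod (p ^ 2)) = 0} ≃
      {x : ZMod (p ^ 2) // IsUnit x ∧ IsUnit (1 - x)} :=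
    { toFun := fun ab => ⟨(ab.1.1 : ZMod (p ^ 2)), ab.1.1.isUnit, by
        have h := ab.2
        have h2 : (1 : ZMod (p ^ 2)) - (ab.1.1 : ZMod (p ^ 2)) = (ab.1.2 : ZMod (p ^ 2)) := by
          linear_combination h
        rw [h2]
        exact ab.1.2.isUnit⟩
      invFun := fun x => ⟨(x.2.1.unit, x.2.2.unit), by
        simp only [IsUnit.unit_spec]
        ring⟩
      left_inv := fun ab => by
        apply Subtype.ext
        have h := ab.2
        apply Prod.ext
        · exact Units.ext ((ab.1.1.isUnit).unit_spec)
        · apply Units.ext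
          refine (IsUnit.unit_spec _).trans ?_
          linear_combination h
      right_inv := fun x => Subtype.ext (x.2.1.unit_spec) }
  have e2 : {x : ZMod (p ^ 2) // IsUnit x ∧ IsUnit (1 - x)} ≃
      {x : ZMod (p ^ 2) // pi p x ≠ 0 ∧ pi p x ≠ 1} :=
    Equiv.subtypeEquivRight (fun x => by
      rw [isUnit_iff_pi, isUnit_iff_pi, map_sub, map_one]
      constructor
      · rintro ⟨h1, h2⟩
        exact ⟨h1, fun hx => h2 (by rw [hx]; ring)⟩
      · rintro ⟨h1, h2⟩
        refine ⟨h1, fun hx => h2 ?_⟩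
        linear_combination - hx)
  rw [Nat.card_congr e1, Nat.card_congr e2,
    count_pi (fun y => y ≠ 0 ∧ y ≠ 1), count_ne01]

lemma count_pairs_pdvd :
    Nat.card {ab : (ZMod (p ^ 2))ˣ × (ZMod (p ^ 2))ˣ //
        (p : ZMod (p ^ 2)) ∣ (1 : ZMod (p ^ 2)) - (ab.1 : ZMod (p ^ 2)) - (ab.2 : ZMod (p ^ 2))} =
      p * (p * (p - 2)) := by
  haveI : Fact (1 < p) := ⟨hp.out.one_lt⟩
  -- rewrite divisibility through pi
  have e0 : {ab : (ZMod (p ^ 2))ˣ × (ZMod (p ^ 2))ˣ //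
        (p : ZMod (p ^ 2)) ∣ (1 : ZMod (p ^ 2)) - (ab.1 : ZMod (p ^ 2)) - (ab.2 : ZMod (p ^ 2))} ≃
      {ab : (ZMod (p ^ 2))ˣ × (ZMod (p ^ 2))ˣ //
        pi p ((ab.2 : ZMod (p ^ 2))) = 1 - pi p ((ab.1 : ZMod (p ^ 2)))} :=
    Equiv.subtypeEquivRight (fun ab => by
      rw [← pi_zero_iff, map_sub, map_sub, map_one]
      constructor
      · intro h; linear_combination - h
      · intro h; linear_combination - h)
  rw [Nat.card_congr e0]
  -- decompose as a sigma type
  have e1 := Equiv.subtypeProdEquivSigmaSubtype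
    (fun (a b : (ZMod (p ^ 2))ˣ) => pi p ((b : ZMod (p ^ 2))) = 1 - pi p ((a : ZMod (p ^ 2))))
  rw [Nat.card_congr e1]
  classical
  letI : ∀ a : (ZMod (p ^ 2))ˣ,
      Fintype {b : (ZMod (p ^ 2))ˣ // pi p ((b : ZMod (p ^ 2))) = 1 - pi p ((a : ZMod (p ^ 2)))} :=
    fun a => Fintype.ofFinite _
  rw [Nat.card_eq_fintype_card, Fintype.card_sigma]
  have hfib : ∀ a : (ZMod (p ^ 2))ˣ,
      Fintype.card {b : (ZMod (p ^ 2))ˣ // pi p ((b : ZMod (p ^ 2))) = 1 - pi p ((a : ZMod (p ^ 2)))}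
      = if pi p ((a : ZMod (p ^ 2))) = 1 then 0 else p := by
    intro a
    rw [← Nat.card_eq_fintype_card]
    split_ifs with h1
    · rw [h1]
      have : IsEmpty {b : (ZMod (p ^ 2))ˣ // pi p ((b : ZMod (p ^ 2))) = 1 - 1} := by
        constructor
        rintro ⟨b, hb⟩
        have := (isUnit_iff_pi ((b : ZMod (p ^ 2)))).1 b.isUnit
        rw [hb] at this
        exact this (by ring)
      exact Nat.card_of_isEmpty
    · exact count_units_fiber _ (fun h => h1 (by linear_combination - h))
  rw [Finset.sum_congr rfl (fun a _ => hfib a)]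
  -- evaluate the sum
  have : (∑ a : (ZMod (p ^ 2))ˣ, if pi p ((a : ZMod (p ^ 2))) = 1 then 0 else p)
      = p * (Finset.univ.filter
          (fun a : (ZMod (p ^ 2))ˣ => ¬ pi p ((a : ZMod (p ^ 2))) = 1)).card := by
    rw [Finset.sum_ite, Finset.sum_const, Finset.sum_const]
    simp [mul_comm]
  rw [this]
  congr 1
  rw [← Fintype.card_subtype, ← Nat.card_eq_fintype_card]
  have e2 : {a : (ZMod (p ^ 2))ˣ // ¬ pi p ((a : ZMod (p ^ 2))) = 1} ≃
      {x : ZMod (p ^ 2) // IsUnit x ∧ ¬ pi p x = 1} := unitsSub (fun x => ¬ pi p x = 1)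
  have e3 : {x : ZMod (p ^ 2) // IsUnit x ∧ ¬ pi p x = 1} ≃
      {x : ZMod (p ^ 2) // pi p x ≠ 0 ∧ pi p x ≠ 1} :=
    Equiv.subtypeEquivRight (fun x => by rw [isUnit_iff_pi])
  rw [Nat.card_congr e2, Nat.card_congr e3, count_pi (fun y => y ≠ 0 ∧ y ≠ 1), count_ne01]

lemma card_units_psq :
    Nat.card ((ZMod (p ^ 2))ˣ) = p * (p - 1) := by
  rw [Nat.card_eq_fintype_card, ZMod.card_units_eq_totient,
    Nat.totient_prime_pow hp.out (by norm_num)]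
  simp [pow_one]

end Count


/-! ### Section 6 : final assembly -/

section Final

open scoped Classical

variable {p : ℕ} [hp : Fact p.Prime]

lemma mqG_eq_sum :
    mqG (ZMod (p ^ 2)) =
      ∑ ab : (ZMod (p ^ 2))ˣ × (ZMod (p ^ 2))ˣ,
        (if (1 : ZMod (p ^ 2)) - (ab.1 : ZMod (p ^ 2)) - (ab.2 : ZMod (p ^ 2)) = 0 then 3
         else if (p : ZMod (p ^ 2)) ∣ (1 : ZMod (p ^ 2)) - (ab.1 : ZMod (p ^ 2)) -
            (ab.2 : ZMod (p ^ 2)) then 2 else 1) := by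
  have h1 : mqG (ZMod (p ^ 2)) =
      Nat.card (Quot (fun o o' : OpS (p ^ 2) => QuasigroupIso o.1 o'.1)) := rfl
  rw [h1, ← Nat.card_congr (quotEquiv (p ^ 2)), card_quot_rel]
  exact Finset.sum_congr rfl (fun ab _ => card_fiber _)

lemma mqG_card :
    mqG (ZMod (p ^ 2)) = p * (p - 1) * (p * (p - 1)) + p * (p * (p - 2)) + p * (p - 2) := by
  rw [mqG_eq_sum]
  have hpt : ∀ ab : (ZMod (p ^ 2))ˣ × (ZMod (p ^ 2))ˣ,
      (if (1 : ZMod (p ^ 2)) - (ab.1 : ZMod (p ^ 2)) - (ab.2 : ZMod (p ^ 2)) = 0 then 3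
       else if (p : ZMod (p ^ 2)) ∣ (1 : ZMod (p ^ 2)) - (ab.1 : ZMod (p ^ 2)) -
          (ab.2 : ZMod (p ^ 2)) then 2 else 1) =
      1 + (if (p : ZMod (p ^ 2)) ∣ (1 : ZMod (p ^ 2)) - (ab.1 : ZMod (p ^ 2)) -
            (ab.2 : ZMod (p ^ 2)) then 1 else 0)
        + (if (1 : ZMod (p ^ 2)) - (ab.1 : ZMod (p ^ 2)) - (ab.2 : ZMod (p ^ 2)) = 0
            then 1 else 0) := by
    intro ab
    by_cases h1 : (1 : ZMod (p ^ 2)) - (ab.1 : ZMod (p ^ 2)) - (ab.2 : ZMod (p ^ 2)) = 0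
    · rw [if_pos h1, if_pos h1, if_pos (h1 ▸ dvd_zero _)]
    · rw [if_neg h1, if_neg h1]
      by_cases h2 : (p : ZMod (p ^ 2)) ∣
          (1 : ZMod (p ^ 2)) - (ab.1 : ZMod (p ^ 2)) - (ab.2 : ZMod (p ^ 2))
      · rw [if_pos h2, if_pos h2]
      · rw [if_neg h2, if_neg h2]
  rw [Finset.sum_congr rfl (fun ab _ => hpt ab), Finset.sum_add_distrib,
    Finset.sum_add_distrib, Finset.sum_const, Finset.sum_boole, Finset.sum_boole]
  have hA : (Finset.univ.filter
      (fun ab : (ZMod (p ^ 2))ˣ × (ZMod (p ^ 2))ˣ =>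
        (p : ZMod (p ^ 2)) ∣ (1 : ZMod (p ^ 2)) - (ab.1 : ZMod (p ^ 2)) -
          (ab.2 : ZMod (p ^ 2)))).card = p * (p * (p - 2)) := by
    rw [← Fintype.card_subtype, ← Nat.card_eq_fintype_card]
    exact count_pairs_pdvd
  have hB : (Finset.univ.filter
      (fun ab : (ZMod (p ^ 2))ˣ × (ZMod (p ^ 2))ˣ =>
        (1 : ZMod (p ^ 2)) - (ab.1 : ZMod (p ^ 2)) - (ab.2 : ZMod (p ^ 2)) = 0)).card
      = p * (p - 2) := by
    rw [← Fintype.card_subtype, ← Nat.card_eq_fintype_card]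
    exact count_pairs_zero
  have hC : (Finset.univ : Finset ((ZMod (p ^ 2))ˣ × (ZMod (p ^ 2))ˣ)).card • (1 : ℕ) = p * (p - 1) * (p * (p - 1)) := by
    rw [smul_eq_mul, mul_one, Finset.card_univ, Fintype.card_prod,
      ← Nat.card_eq_fintype_card]
    rw [card_units_psq]
  rw [Nat.cast_id, Nat.cast_id, hA, hB, hC]

end Final

end MQ

/-- For every prime `p`, there are exactly `p^4 - p^3 - 2p` medial quasigroups
admitting an affine form over the cyclic group `ℤ_{p^2}`, up to isomorphism. -/
theorem mq_cyclic_p_squared (p : ℕ) (hp : p.Prime) :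
    (mqG (ZMod (p ^ 2)) : ℤ) = (p : ℤ) ^ 4 - (p : ℤ) ^ 3 - 2 * (p : ℤ) := by
  haveI : Fact p.Prime := ⟨hp⟩
  rw [MQ.mqG_card]
  have h2 : 2 ≤ p := hp.two_le
  have c1 : ((p - 1 : ℕ) : ℤ) = (p : ℤ) - 1 := Nat.cast_sub (by omega)
  have c2 : ((p - 2 : ℕ) : ℤ) = (p : ℤ) - 2 := Nat.cast_sub (by omega)
  push_cast [c1, c2]
  ring
end

section
/- For every prime p and every natural number k ≥ 1, the number of medial quasigroups that admit an affine form over the cyclic group Z_{p^k}, counted up to isomorphism, equals p^{2k} + p^{2k-2} - p^{k-1} - (p^{k-1} + p^k + ... + p^{2k-1}), i.e. p^{2k} + p^{2k-2} - p^{k-1} - Σ_{i=k-1}^{2k-1} p^i. -/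
open Finset

namespace MQAux

variable {n : ℕ}

/-- Any additive self-map of `ZMod n` is multiplication by its value at 1. -/
lemma add_map_eq_mul {g : ZMod n → ZMod n} (hg : ∀ x y, g (x + y) = g x + g y)
    (x : ZMod n) : g x = g 1 * x := by
  let G : ZMod n →+ ZMod n := AddMonoidHom.mk' g hg
  show G x = G 1 * x
  rw [mul_comm, ← x.intCast_zmod_cast, ← zsmul_eq_mul, ← map_zsmul, zsmul_one]

/-- Any additive automorphism of `ZMod n` is multiplication by a unit. -/
lemma addEquiv_exists_unit (φ : ZMod n ≃+ ZMod n) : ∃ u : (ZMod n)ˣ, ∀ x, φ x = u * x := by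
  have h1 : ∀ x, φ x = φ 1 * x := add_map_eq_mul (map_add φ)
  have hinv : φ 1 * φ.symm 1 = 1 := by rw [← h1, φ.apply_symm_apply]
  exact ⟨⟨φ 1, φ.symm 1, hinv, by rw [mul_comm]; exact hinv⟩, h1⟩

/-- multiplication by a unit, as an equiv. -/
def mulUnitEquiv (u : (ZMod n)ˣ) : ZMod n ≃ ZMod n where
  toFun x := u * x
  invFun x := ↑u⁻¹ * x
  left_inv x := by simp
  right_inv x := by simp

/-- multiplication by a unit, as an additive equiv. -/
def mulUnitAddEquiv (u : (ZMod n)ˣ) : ZMod n ≃+ ZMod n :=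
  { mulUnitEquiv u with map_add' := fun x y => mul_add _ x y }

/-- The standard affine operation. -/
def stdOp (n : ℕ) (a b : (ZMod n)ˣ) (c : ZMod n) : ZMod n → ZMod n → ZMod n :=
  fun x y => a * x + b * y + c

lemma stdOp_quasigroup (a b : (ZMod n)ˣ) (c : ZMod n) : IsQuasigroup (stdOp n a b c) := by
  constructor
  · intro x
    exact ((mulUnitEquiv b).trans ((Equiv.addLeft ((a : ZMod n) * x)).trans
      (Equiv.addRight c))).bijective
  · intro y
    exact ((mulUnitEquiv a).trans ((Equiv.addRight ((b : ZMod n) * y)).trans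
      (Equiv.addRight c))).bijective

lemma stdOp_medial (a b : (ZMod n)ˣ) (c : ZMod n) : IsMedial (stdOp n a b c) := by
  intro x y u v
  simp only [stdOp]
  ring

lemma stdOp_affine (a b : (ZMod n)ˣ) (c : ZMod n) :
    AdmitsAffineForm (stdOp n a b c) (ZMod n) :=
  ⟨Equiv.refl _, mulUnitAddEquiv a, mulUnitAddEquiv b, c, fun x y => rfl⟩


/-- The isomorphism criterion for standard affine quasigroups over `ZMod n`. -/
lemma iso_std_iff (a b a' b' : (ZMod n)ˣ) (c c' : ZMod n) :
    QuasigroupIso (stdOp n a b c) (stdOp n a' b' c') ↔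
      a = a' ∧ b = b' ∧ ∃ (u : (ZMod n)ˣ) (e : ZMod n),
        c' = u * c + ((a : ZMod n) + b - 1) * e := by
  constructor
  · rintro ⟨f, hf⟩
    simp only [stdOp] at hf
    -- the conjugated map g is additive
    have key : ∀ x y : ZMod n, f (x + y + c) = f (x + c) + f (y + c) - f c := by
      intro x y
      have h1 := hf (↑a⁻¹ * x) (↑b⁻¹ * y)
      have h2 := hf (↑a⁻¹ * x) (↑b⁻¹ * 0)
      have h3 := hf (↑a⁻¹ * 0) (↑b⁻¹ * y)
      have h4 := hf (↑a⁻¹ * 0) (↑b⁻¹ * 0)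
      simp only [Units.mul_inv_cancel_left, mul_zero, add_zero, zero_add] at h1 h2 h3 h4
      rw [h1, h2, h3, h4]
      ring
    set g : ZMod n → ZMod n := fun x => f (x + c) - f c with hgdef
    have hgadd : ∀ x y, g (x + y) = g x + g y := by
      intro x y
      simp only [hgdef]
      rw [key]
      ring
    have hglin : ∀ x, g x = g 1 * x := add_map_eq_mul hgadd
    have hgbij : Function.Bijective g := by
      have : g = (fun z => z - f c) ∘ f ∘ (fun x => x + c) := rfl
      rw [this]
      exact ((Equiv.subRight (f c)).bijective.comp f.bijective).comp
        (Equiv.addRight c).bijective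
    -- g 1 is a unit
    obtain ⟨z, hz⟩ := hgbij.surjective 1
    rw [hglin z] at hz
    set w : (ZMod n)ˣ := ⟨g 1, z, hz, by rw [mul_comm]; exact hz⟩ with hwdef
    -- f x = w * (x - c) + f c
    have hfx : ∀ x, f x = (w : ZMod n) * (x - c) + f c := by
      intro x
      have h0 : g (x - c) = f x - f c := by simp [hgdef]
      rw [hglin] at h0
      show f x = g 1 * (x - c) + f c
      linear_combination -h0
    -- now extract coefficient equations
    have E : ∀ x y : ZMod n, (w : ZMod n) * (↑a * x + ↑b * y) + f c
        = ↑a' * ((w : ZMod n) * (x - c) + f c) + ↑b' * ((w : ZMod n) * (y - c) + f c) + c' := by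
      intro x y
      have h := hf x y
      rw [hfx (↑a * x + ↑b * y + c), hfx x, hfx y] at h
      calc (w : ZMod n) * (↑a * x + ↑b * y) + f c
          = ↑w * (↑a * x + ↑b * y + c - c) + f c := by ring
        _ = _ := h
    have E00 := E 0 0
    have E10 := E 1 0
    have E01 := E 0 1
    have ha : (a : ZMod n) = a' := by
      have h2 : (a : ZMod n) * w = (a' : ZMod n) * w := by
        have := congrArg₂ (· - ·) E10 E00
        linear_combination this
      exact w.isUnit.mul_right_cancel h2
    have hb : (b : ZMod n) = b' := by
      have h2 : (b : ZMod n) * w = (b' : ZMod n) * w := by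
        have := congrArg₂ (· - ·) E01 E00
        linear_combination this
      exact w.isUnit.mul_right_cancel h2
    refine ⟨Units.ext ha, Units.ext hb, w, (w : ZMod n) * c - f c, ?_⟩
    -- from E00 : f c = a'(w(0-c)+fc) + b'(w(0-c)+fc) + c'
    rw [← ha, ← hb] at E00
    linear_combination -E00
  · rintro ⟨rfl, rfl, u, e, hc⟩
    refine ⟨(mulUnitEquiv u).trans (Equiv.addRight (-e)), fun x y => ?_⟩
    simp only [Equiv.trans_apply, Equiv.coe_addRight, mulUnitEquiv, Equiv.coe_fn_mk, stdOp]
    rw [hc]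
    ring


def stdSub (n : ℕ) (a b : (ZMod n)ˣ) (c : ZMod n) :
    {op : ZMod n → ZMod n → ZMod n //
      IsQuasigroup op ∧ IsMedial op ∧ AdmitsAffineForm op (ZMod n)} :=
  ⟨stdOp n a b c, stdOp_quasigroup _ _ _, stdOp_medial _ _ _, stdOp_affine _ _ _⟩
-- new stuff

/-- The coset relation on constants. -/
def scRel (n : ℕ) (m : ZMod n) (c c' : ZMod n) : Prop :=
  ∃ (u : (ZMod n)ˣ) (e : ZMod n), c' = u * c + m * e

lemma quasigroupIso_equivalence {Q : Type*} :
    Equivalence (fun op₁ op₂ : Q → Q → Q => QuasigroupIso op₁ op₂) := by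
  constructor
  · intro op; exact ⟨Equiv.refl Q, fun x y => rfl⟩
  · rintro op₁ op₂ ⟨f, hf⟩
    refine ⟨f.symm, fun x y => ?_⟩
    have := hf (f.symm x) (f.symm y)
    simp only [Equiv.apply_symm_apply] at this
    rw [← this, Equiv.symm_apply_apply]
  · rintro op₁ op₂ op₃ ⟨f, hf⟩ ⟨g, hg⟩
    exact ⟨f.trans g, fun x y => by simp [hf, hg]⟩

lemma rop_equivalence {Q : Type*} (P : (Q → Q → Q) → Prop) :
    Equivalence (fun op₁ op₂ : {op : Q → Q → Q // P op} => QuasigroupIso op₁.1 op₂.1) :=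
  ⟨fun o => quasigroupIso_equivalence.refl o.1,
   fun h => quasigroupIso_equivalence.symm h,
   fun h h' => quasigroupIso_equivalence.trans h h'⟩

/-- The main structural bijection. -/
lemma mqG_eq_sum [NeZero n] :
    mqG (ZMod n) = ∑ ab : (ZMod n)ˣ × (ZMod n)ˣ,
      Nat.card (Quot (scRel n ((ab.1 : ZMod n) + (ab.2 : ZMod n) - 1))) := by
  classical
  set r := fun (op₁ op₂ : {op : ZMod n → ZMod n → ZMod n //
      IsQuasigroup op ∧ IsMedial op ∧ AdmitsAffineForm op (ZMod n)}) =>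
    QuasigroupIso op₁.1 op₂.1 with hr
  have hreq : Equivalence r := rop_equivalence _
  -- the map from the sigma type
  have resp : ∀ (ab : (ZMod n)ˣ × (ZMod n)ˣ) (c c' : ZMod n),
      scRel n ((ab.1 : ZMod n) + (ab.2 : ZMod n) - 1) c c' →
      Quot.mk r (stdSub n ab.1 ab.2 c) = Quot.mk r (stdSub n ab.1 ab.2 c') := by
    rintro ab c c' ⟨u, e, he⟩
    exact Quot.sound ((iso_std_iff ab.1 ab.2 ab.1 ab.2 c c').mpr ⟨rfl, rfl, u, e, he⟩)
  set F : (Σ ab : (ZMod n)ˣ × (ZMod n)ˣ,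
      Quot (scRel n ((ab.1 : ZMod n) + (ab.2 : ZMod n) - 1))) → Quot r :=
    fun x => Quot.lift (fun c => Quot.mk r (stdSub n x.1.1 x.1.2 c)) (resp x.1) x.2 with hF
  have hsurj : Function.Surjective F := by
    intro q
    induction q using Quot.ind with
    | _ op =>
      obtain ⟨e, φ, ψ, c, hop⟩ := op.2.2.2
      obtain ⟨a, ha⟩ := addEquiv_exists_unit φ
      obtain ⟨b, hb⟩ := addEquiv_exists_unit ψ
      refine ⟨⟨(a, b), Quot.mk _ c⟩, ?_⟩
      show Quot.mk r (stdSub n a b c) = Quot.mk r op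
      refine Quot.sound (hreq.symm ⟨e, fun x y => ?_⟩)
      rw [hop, ha, hb]; rfl
  have hinj : Function.Injective F := by
    rintro ⟨ab, q⟩ ⟨ab', q'⟩ h
    induction q using Quot.ind with
    | _ c =>
    induction q' using Quot.ind with
    | _ c' =>
      have h2 : Quot.mk r (stdSub n ab.1 ab.2 c) = Quot.mk r (stdSub n ab'.1 ab'.2 c') := h
      rw [Quot.eq] at h2
      have h3 : r (stdSub n ab.1 ab.2 c) (stdSub n ab'.1 ab'.2 c') :=
        (Equivalence.eqvGen_iff hreq).mp h2
      obtain ⟨h4, h5, u, e, he⟩ := (iso_std_iff ab.1 ab.2 ab'.1 ab'.2 c c').mp h3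
      obtain ⟨a, b⟩ := ab
      obtain ⟨a', b'⟩ := ab'
      cases h4; cases h5
      have : Quot.mk _ c = Quot.mk (scRel n ((a : ZMod n) + (b : ZMod n) - 1)) c' :=
        Quot.sound ⟨u, e, he⟩
      rw [Sigma.mk.inj_iff]
      exact ⟨rfl, heq_of_eq this⟩
  have := Nat.card_eq_of_bijective F ⟨hinj, hsurj⟩
  rw [mqG, ← this]
  haveI hfin : ∀ ab : (ZMod n)ˣ × (ZMod n)ˣ,
      Finite (Quot (scRel n ((ab.1 : ZMod n) + (ab.2 : ZMod n) - 1))) := by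
    intro ab
    exact Finite.of_surjective (Quot.mk _) Quot.exists_rep
  haveI : ∀ ab : (ZMod n)ˣ × (ZMod n)ˣ,
      Fintype (Quot (scRel n ((ab.1 : ZMod n) + (ab.2 : ZMod n) - 1))) :=
    fun ab => Fintype.ofFinite _
  rw [Nat.card_eq_fintype_card, Fintype.card_sigma]
  exact Finset.sum_congr rfl fun ab _ => (Nat.card_eq_fintype_card).symm


variable {p k : ℕ}

/-- capped p-adic valuation on `ZMod (p^k)`. -/
noncomputable def pv (p k : ℕ) (c : ZMod (p ^ k)) : ℕ :=
  @Nat.findGreatest (fun j => (p : ZMod (p ^ k)) ^ j ∣ c) (Classical.decPred _) k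

section basic
variable (hp : p.Prime) (hk : 1 ≤ k)
include hp

lemma pk_pos : 0 < p ^ k := pow_pos hp.pos k

lemma neZero_pk : NeZero (p ^ k) := ⟨(pk_pos hp).ne'⟩

/-- transfer of divisibility by `p^j` to values. -/
lemma dvd_transfer {j : ℕ} (hj : j ≤ k) (c : ZMod (p ^ k)) :
    (p : ZMod (p ^ k)) ^ j ∣ c ↔ p ^ j ∣ c.val := by
  haveI := neZero_pk (k := k) hp
  have hcv : ((c.val : ℕ) : ZMod (p ^ k)) = c := ZMod.natCast_rightInverse c
  constructor
  · rintro ⟨y, hy⟩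
    have hyv : ((y.val : ℕ) : ZMod (p ^ k)) = y := ZMod.natCast_rightInverse y
    have h1 : ((c.val : ℕ) : ZMod (p ^ k)) = ((p ^ j * y.val : ℕ) : ZMod (p ^ k)) := by
      push_cast
      rw [hcv, hyv]
      exact hy
    have h2 : c.val ≡ p ^ j * y.val [MOD p ^ k] := (ZMod.natCast_eq_natCast_iff _ _ _).mp h1
    have h3 : c.val ≡ p ^ j * y.val [MOD p ^ j] := h2.of_dvd (pow_dvd_pow p hj)
    have h4 : p ^ j * y.val ≡ 0 [MOD p ^ j] :=
      (Nat.modEq_zero_iff_dvd).mpr ⟨y.val, rfl⟩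
    exact (Nat.modEq_zero_iff_dvd).mp (h3.trans h4)
  · rintro ⟨d, hd⟩
    refine ⟨(d : ZMod (p ^ k)), ?_⟩
    rw [← hcv, hd]
    push_cast
    ring

lemma pv_le (c : ZMod (p ^ k)) : pv p k c ≤ k :=
  @Nat.findGreatest_le _ (Classical.decPred _) k

lemma pow_pv_dvd (c : ZMod (p ^ k)) : (p : ZMod (p ^ k)) ^ (pv p k c) ∣ c :=
  @Nat.findGreatest_spec 0 (fun j => (p : ZMod (p ^ k)) ^ j ∣ c) (Classical.decPred _) k
    (Nat.zero_le k) (by simp : (p : ZMod (p ^ k)) ^ 0 ∣ c)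

lemma le_pv {j : ℕ} (hj : j ≤ k) {c : ZMod (p ^ k)} (h : (p : ZMod (p ^ k)) ^ j ∣ c) :
    j ≤ pv p k c := @Nat.le_findGreatest _ _ (Classical.decPred _) _ hj h

lemma dvd_iff_le_pv {j : ℕ} (hj : j ≤ k) (c : ZMod (p ^ k)) :
    (p : ZMod (p ^ k)) ^ j ∣ c ↔ j ≤ pv p k c := by
  constructor
  · exact le_pv hp hj
  · intro h
    exact dvd_trans (pow_dvd_pow _ h) (pow_pv_dvd hp c)

lemma not_dvd_succ_pv {c : ZMod (p ^ k)} (h : pv p k c < k) :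
    ¬ (p : ZMod (p ^ k)) ^ (pv p k c + 1) ∣ c :=
  @Nat.findGreatest_is_greatest _ _ (Classical.decPred _) _ (Nat.lt_succ_self _) h

lemma ppow_k_eq_zero : (p : ZMod (p ^ k)) ^ k = 0 := by
  have : ((p ^ k : ℕ) : ZMod (p ^ k)) = 0 := ZMod.natCast_self _
  push_cast at this
  exact this

lemma eq_zero_of_pv_eq_k {c : ZMod (p ^ k)} (h : pv p k c = k) : c = 0 := by
  have := pow_pv_dvd hp c
  rw [h, ppow_k_eq_zero hp] at this
  exact (zero_dvd_iff).mp this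

/-- extracting a unit: if `pv c < k` then `c = p^(pv c) * w` with `w` a unit. -/
lemma exists_unit_factor {c : ZMod (p ^ k)} (h : pv p k c < k) :
    ∃ w : (ZMod (p ^ k))ˣ, c = (p : ZMod (p ^ k)) ^ (pv p k c) * w := by
  haveI := neZero_pk (k := k) hp
  set i := pv p k c with hi
  have h1 : p ^ i ∣ c.val := (dvd_transfer hp (le_of_lt h) c).mp (pow_pv_dvd hp c)
  obtain ⟨s, hs⟩ := h1
  have h2 : ¬ p ∣ s := by
    intro ⟨t, ht⟩
    have : p ^ (i + 1) ∣ c.val := ⟨t, by rw [hs, ht]; ring⟩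
    exact not_dvd_succ_pv hp h ((dvd_transfer hp h c).mpr this)
  have hcop : s.Coprime (p ^ k) :=
    Nat.Coprime.pow_right k ((Nat.coprime_comm).mp (hp.coprime_iff_not_dvd.mpr h2))
  refine ⟨ZMod.unitOfCoprime s hcop, ?_⟩
  have hcv : ((c.val : ℕ) : ZMod (p ^ k)) = c := ZMod.natCast_rightInverse c
  have : ((ZMod.unitOfCoprime s hcop : (ZMod (p ^ k))ˣ) : ZMod (p ^ k)) = (s : ZMod (p ^ k)) :=
    rfl
  rw [this, ← hcv, hs]
  push_cast
  ring

lemma scRel_symm {m c c' : ZMod (p ^ k)} (h : scRel (p ^ k) m c c') : scRel (p ^ k) m c' c := by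
  obtain ⟨u, e, he⟩ := h
  refine ⟨u⁻¹, -(↑u⁻¹ * e), ?_⟩
  rw [he]
  have hu : (↑u⁻¹ : ZMod (p ^ k)) * ↑u = 1 := u.inv_mul
  linear_combination (-c) * hu

lemma pv_add_unit_mul {m c c' : ZMod (p ^ k)} (h : scRel (p ^ k) m c c') :
    min (pv p k c) (pv p k m) ≤ min (pv p k c') (pv p k m) := by
  obtain ⟨u, e, he⟩ := h
  set i := min (pv p k c) (pv p k m) with hi
  have hik : i ≤ k := le_trans (min_le_left _ _) (pv_le hp c)
  have h1 : (p : ZMod (p ^ k)) ^ i ∣ c :=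
    (dvd_iff_le_pv hp hik c).mpr (min_le_left _ _)
  have h2 : (p : ZMod (p ^ k)) ^ i ∣ m :=
    (dvd_iff_le_pv hp hik m).mpr (min_le_right _ _)
  have h3 : (p : ZMod (p ^ k)) ^ i ∣ c' := by
    rw [he]
    exact dvd_add (Dvd.dvd.mul_left h1 _) (Dvd.dvd.mul_right h2 _)
  exact le_min (le_pv hp hik h3) (min_le_right _ _)

lemma scRel_iff_min_eq {m c c' : ZMod (p ^ k)} :
    scRel (p ^ k) m c c' ↔
      min (pv p k c) (pv p k m) = min (pv p k c') (pv p k m) := by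
  constructor
  · intro h
    exact le_antisymm (pv_add_unit_mul hp h) (pv_add_unit_mul hp (scRel_symm hp h))
  · intro h
    by_cases h1 : pv p k c < pv p k m
    · have hmin : min (pv p k c) (pv p k m) = pv p k c := min_eq_left (le_of_lt h1)
      have hc' : pv p k c' = pv p k c := by
        rcases le_or_gt (pv p k m) (pv p k c') with h2 | h2
        · rw [hmin, min_eq_right h2] at h
          omega
        · rw [hmin, min_eq_left (le_of_lt h2)] at h
          omega
      have hck : pv p k c < k := lt_of_lt_of_le h1 (pv_le hp m)
      have hck' : pv p k c' < k := by omega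
      obtain ⟨w1, hw1⟩ := exists_unit_factor hp hck
      obtain ⟨w2, hw2⟩ := exists_unit_factor hp hck'
      rw [hc'] at hw2
      refine ⟨w2 * w1⁻¹, 0, ?_⟩
      rw [Units.val_mul]
      have hiw : (↑w1⁻¹ : ZMod (p ^ k)) * ↑w1 = 1 := w1.inv_mul
      linear_combination hw2 - ((w2 : ZMod (p ^ k)) * (↑w1⁻¹ : ZMod (p ^ k))) * hw1 -
        ((p : ZMod (p ^ k)) ^ pv p k c * (w2 : ZMod (p ^ k))) * hiw
    · push_neg at h1
      have hmin : min (pv p k c) (pv p k m) = pv p k m := min_eq_right h1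
      have h2 : pv p k m ≤ pv p k c' := by
        rcases le_or_gt (pv p k m) (pv p k c') with h2 | h2
        · exact h2
        · rw [hmin, min_eq_left (le_of_lt h2)] at h
          omega
      set t := pv p k m with ht
      have htk : t ≤ k := pv_le hp m
      have hdc : (p : ZMod (p ^ k)) ^ t ∣ c := (dvd_iff_le_pv hp htk c).mpr h1
      have hdc' : (p : ZMod (p ^ k)) ^ t ∣ c' := (dvd_iff_le_pv hp htk c').mpr h2
      rcases lt_or_eq_of_le htk with hlt | heq
      · obtain ⟨w, hw⟩ := exists_unit_factor hp hlt
        obtain ⟨y, hy⟩ := dvd_sub hdc' hdc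
        refine ⟨1, ↑w⁻¹ * y, ?_⟩
        simp only [Units.val_one, one_mul]
        have hww : (↑w : ZMod (p ^ k)) * ↑w⁻¹ = 1 := w.mul_inv
        linear_combination hy - ((↑w⁻¹ : ZMod (p ^ k)) * y) * hw -
          ((p : ZMod (p ^ k)) ^ t * y) * hww
      · have hm0 : m = 0 := eq_zero_of_pv_eq_k hp (by omega : pv p k m = k)
        have hc0 : c = 0 := by
          rw [heq, ppow_k_eq_zero hp, zero_dvd_iff] at hdc
          exact hdc
        have hc'0 : c' = 0 := by
          rw [heq, ppow_k_eq_zero hp, zero_dvd_iff] at hdc'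
          exact hdc'
        exact ⟨1, 0, by simp [hc0, hc'0]⟩


lemma not_dvd_pow_succ {i : ℕ} (hik : i < k) :
    ¬ (p : ZMod (p ^ k)) ^ (i + 1) ∣ (p : ZMod (p ^ k)) ^ i := by
  intro h
  have h1 : p ^ (i + 1) ∣ ((p : ZMod (p ^ k)) ^ i).val :=
    (dvd_transfer hp hik _).mp h
  have hlt : p ^ i < p ^ k := Nat.pow_lt_pow_right hp.one_lt hik
  have hval : ((p : ZMod (p ^ k)) ^ i).val = p ^ i := by
    have : ((p ^ i : ℕ) : ZMod (p ^ k)) = (p : ZMod (p ^ k)) ^ i := by push_cast; ring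
    rw [← this, ZMod.val_cast_of_lt hlt]
  rw [hval] at h1
  have := (Nat.pow_dvd_pow_iff_le_right hp.one_lt).mp h1
  omega

lemma pv_ppow {i : ℕ} (hik : i ≤ k) : pv p k ((p : ZMod (p ^ k)) ^ i) = i := by
  have h1 : i ≤ pv p k ((p : ZMod (p ^ k)) ^ i) := le_pv hp hik dvd_rfl
  rcases lt_or_eq_of_le hik with hlt | heq
  · by_contra hne
    have h2 : i + 1 ≤ pv p k ((p : ZMod (p ^ k)) ^ i) := by omega
    exact not_dvd_pow_succ hp hlt
      ((dvd_iff_le_pv hp (by omega) _).mpr h2)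
  · have := pv_le hp ((p : ZMod (p ^ k)) ^ i)
    omega

lemma card_quot_scRel (m : ZMod (p ^ k)) :
    Nat.card (Quot (scRel (p ^ k) m)) = pv p k m + 1 := by
  have hresp : ∀ c c' : ZMod (p ^ k), scRel (p ^ k) m c c' →
      (⟨min (pv p k c) (pv p k m), by
        have := min_le_right (pv p k c) (pv p k m); omega⟩ : Fin (pv p k m + 1)) =
      ⟨min (pv p k c') (pv p k m), by
        have := min_le_right (pv p k c') (pv p k m); omega⟩ := by
    intro c c' h
    exact Fin.ext ((scRel_iff_min_eq hp).mp h)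
  have e : Quot (scRel (p ^ k) m) ≃ Fin (pv p k m + 1) :=
    { toFun := Quot.lift (fun c => (⟨min (pv p k c) (pv p k m), by
        have := min_le_right (pv p k c) (pv p k m); omega⟩ : Fin (pv p k m + 1))) hresp
      invFun := fun i => Quot.mk _ ((p : ZMod (p ^ k)) ^ (i : ℕ))
      left_inv := by
        intro q
        induction q using Quot.ind with
        | _ c =>
          apply Quot.sound
          show scRel (p ^ k) m ((p : ZMod (p ^ k)) ^ (min (pv p k c) (pv p k m))) c
          have hι : min (pv p k c) (pv p k m) ≤ k :=
            le_trans (min_le_right _ _) (pv_le hp m)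
          rw [scRel_iff_min_eq hp, pv_ppow hp hι]
          omega
      right_inv := by
        intro i
        apply Fin.ext
        show min (pv p k ((p : ZMod (p ^ k)) ^ (i : ℕ))) (pv p k m) = (i : ℕ)
        have hik : (i : ℕ) ≤ k := by
          have h1 : (i : ℕ) ≤ pv p k m := by omega
          exact le_trans h1 (pv_le hp m)
        rw [pv_ppow hp hik]
        omega }
  rw [Nat.card_congr e, Nat.card_eq_fintype_card, Fintype.card_fin]


end basic

lemma nat_card_sigma {ι : Type*} [Fintype ι] (f : ι → Type*) [∀ i, Finite (f i)] :
    Nat.card (Σ i, f i) = ∑ i, Nat.card (f i) := by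
  haveI : ∀ i, Fintype (f i) := fun i => Fintype.ofFinite _
  rw [Nat.card_eq_fintype_card, Fintype.card_sigma]
  exact Finset.sum_congr rfl fun i _ => (Nat.card_eq_fintype_card).symm

section count
variable (hp : p.Prime) (hk : 1 ≤ k)
include hp hk

lemma one_lt_pk : 1 < p ^ k := Nat.one_lt_pow (by omega) hp.one_lt

lemma not_p_dvd_one : ¬ (p : ZMod (p ^ k)) ∣ (1 : ZMod (p ^ k)) := by
  haveI := neZero_pk (k := k) hp
  intro h
  have h1 : (p : ZMod (p ^ k)) ^ 1 ∣ (1 : ZMod (p ^ k)) := by rwa [pow_one]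
  have h2 : p ^ 1 ∣ (1 : ZMod (p ^ k)).val := (dvd_transfer hp hk _).mp h1
  haveI : Fact (1 < p ^ k) := ⟨one_lt_pk hp hk⟩
  rw [ZMod.val_one, pow_one] at h2
  exact absurd (Nat.dvd_one.mp h2) hp.one_lt.ne'

lemma isUnit_iff (x : ZMod (p ^ k)) : IsUnit x ↔ ¬ (p : ZMod (p ^ k)) ∣ x := by
  haveI := neZero_pk (k := k) hp
  have hcv : ((x.val : ℕ) : ZMod (p ^ k)) = x := ZMod.natCast_rightInverse x
  have key : IsUnit x ↔ x.val.Coprime (p ^ k) := by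
    conv_lhs => rw [← hcv]
    exact ZMod.isUnit_iff_coprime x.val (p ^ k)
  rw [key, Nat.coprime_pow_right_iff (by omega), Nat.coprime_comm,
    hp.coprime_iff_not_dvd]
  have h2 := dvd_transfer hp hk x
  rw [pow_one, pow_one] at h2
  exact not_congr h2.symm

lemma card_multiples {j : ℕ} (hj : j ≤ k) :
    Nat.card {y : ZMod (p ^ k) // (p : ZMod (p ^ k)) ^ j ∣ y} = p ^ (k - j) := by
  haveI := neZero_pk (k := k) hp
  have hpj : 0 < p ^ j := pow_pos hp.pos j
  have hpow : p ^ (k - j) * p ^ j = p ^ k := by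
    rw [← pow_add]; congr 1; omega
  have e : {y : ZMod (p ^ k) // (p : ZMod (p ^ k)) ^ j ∣ y} ≃ Fin (p ^ (k - j)) :=
    { toFun := fun y => ⟨y.1.val / p ^ j, by
        have h1 : y.1.val < p ^ k := ZMod.val_lt y.1
        rw [Nat.div_lt_iff_lt_mul hpj, hpow]
        exact h1⟩
      invFun := fun i => ⟨((p ^ j * (i : ℕ) : ℕ) : ZMod (p ^ k)), by
        refine (dvd_transfer hp hj _).mpr ?_
        have hlt : p ^ j * (i : ℕ) < p ^ k := by
          calc p ^ j * (i : ℕ) < p ^ j * p ^ (k - j) :=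
                mul_lt_mul_of_pos_left i.2 hpj
            _ = p ^ k := by rw [mul_comm]; exact hpow
        rw [ZMod.val_cast_of_lt hlt]
        exact ⟨(i : ℕ), rfl⟩⟩
      left_inv := fun y => by
        apply Subtype.ext
        have hd : p ^ j ∣ y.1.val := (dvd_transfer hp hj _).mp y.2
        show ((p ^ j * (y.1.val / p ^ j) : ℕ) : ZMod (p ^ k)) = y.1
        rw [Nat.mul_div_cancel' hd]
        exact ZMod.natCast_rightInverse y.1
      right_inv := fun i => by
        apply Fin.ext
        show (((p ^ j * (i : ℕ) : ℕ) : ZMod (p ^ k))).val / p ^ j = (i : ℕ)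
        have hlt : p ^ j * (i : ℕ) < p ^ k := by
          calc p ^ j * (i : ℕ) < p ^ j * p ^ (k - j) :=
                mul_lt_mul_of_pos_left i.2 hpj
            _ = p ^ k := by rw [mul_comm]; exact hpow
        rw [ZMod.val_cast_of_lt hlt]
        exact Nat.mul_div_cancel_left _ hpj }
  rw [Nat.card_congr e, Nat.card_eq_fintype_card, Fintype.card_fin]

lemma card_bad_units :
    Nat.card {a : (ZMod (p ^ k))ˣ // (p : ZMod (p ^ k)) ∣ (1 - (a : ZMod (p ^ k)))} =
      p ^ (k - 1) := by
  haveI := neZero_pk (k := k) hp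
  have e : {a : (ZMod (p ^ k))ˣ // (p : ZMod (p ^ k)) ∣ (1 - (a : ZMod (p ^ k)))} ≃
      {y : ZMod (p ^ k) // (p : ZMod (p ^ k)) ^ 1 ∣ y} :=
    { toFun := fun a => ⟨1 - (a.1 : ZMod (p ^ k)), by rw [pow_one]; exact a.2⟩
      invFun := fun y => by
        refine ⟨(?_ : IsUnit (1 - y.1)).unit, ?_⟩
        · rw [isUnit_iff hp hk]
          intro hdvd
          have hy : (p : ZMod (p ^ k)) ∣ y.1 := by simpa using y.2
          have : (p : ZMod (p ^ k)) ∣ (1 : ZMod (p ^ k)) := by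
            have := dvd_add hdvd hy
            simpa using this
          exact not_p_dvd_one hp hk this
        · rw [IsUnit.unit_spec]
          have hy : (p : ZMod (p ^ k)) ∣ y.1 := by simpa using y.2
          simpa using hy
      left_inv := fun a => by
        apply Subtype.ext
        apply Units.ext
        rw [IsUnit.unit_spec]
        ring
      right_inv := fun y => by
        apply Subtype.ext
        show 1 - _ = y.1
        rw [IsUnit.unit_spec]
        ring }
  rw [Nat.card_congr e, card_multiples hp hk hk]

lemma card_good_units :
    Nat.card {a : (ZMod (p ^ k))ˣ // ¬ (p : ZMod (p ^ k)) ∣ (1 - (a : ZMod (p ^ k)))} =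
      Nat.card (ZMod (p ^ k))ˣ - p ^ (k - 1) := by
  classical
  haveI := neZero_pk (k := k) hp
  rw [Nat.card_eq_fintype_card, Nat.card_eq_fintype_card,
    Fintype.card_subtype_compl (fun a : (ZMod (p ^ k))ˣ =>
      (p : ZMod (p ^ k)) ∣ (1 - (a : ZMod (p ^ k))))]
  rw [← card_bad_units hp hk, Nat.card_eq_fintype_card]

open Classical in
lemma card_fiber {j : ℕ} (hj1 : 1 ≤ j) (hj : j ≤ k) (a : (ZMod (p ^ k))ˣ) :
    Nat.card {b : (ZMod (p ^ k))ˣ //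
        (p : ZMod (p ^ k)) ^ j ∣ ((a : ZMod (p ^ k)) + (b : ZMod (p ^ k)) - 1)} =
      if (p : ZMod (p ^ k)) ∣ (1 - (a : ZMod (p ^ k))) then 0 else p ^ (k - j) := by
  haveI := neZero_pk (k := k) hp
  have hpj : (p : ZMod (p ^ k)) ∣ (p : ZMod (p ^ k)) ^ j := dvd_pow_self _ (by omega)
  by_cases h : (p : ZMod (p ^ k)) ∣ (1 - (a : ZMod (p ^ k)))
  · rw [if_pos h]
    haveI : IsEmpty {b : (ZMod (p ^ k))ˣ //
        (p : ZMod (p ^ k)) ^ j ∣ ((a : ZMod (p ^ k)) + (b : ZMod (p ^ k)) - 1)} := by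
      refine ⟨fun b => ?_⟩
      have h1 : (p : ZMod (p ^ k)) ∣ ((a : ZMod (p ^ k)) + (b.1 : ZMod (p ^ k)) - 1) :=
        dvd_trans hpj b.2
      have h2 : (p : ZMod (p ^ k)) ∣ (b.1 : ZMod (p ^ k)) := by
        have h3 := dvd_add h1 h
        have h4 : (a : ZMod (p ^ k)) + (b.1 : ZMod (p ^ k)) - 1 +
            (1 - (a : ZMod (p ^ k))) = (b.1 : ZMod (p ^ k)) := by ring
        rwa [h4] at h3
      exact ((isUnit_iff hp hk _).mp b.1.isUnit) h2
    exact Nat.card_of_isEmpty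
  · rw [if_neg h]
    have e : {b : (ZMod (p ^ k))ˣ //
        (p : ZMod (p ^ k)) ^ j ∣ ((a : ZMod (p ^ k)) + (b : ZMod (p ^ k)) - 1)} ≃
        {y : ZMod (p ^ k) // (p : ZMod (p ^ k)) ^ j ∣ y} :=
      { toFun := fun b => ⟨(a : ZMod (p ^ k)) + (b.1 : ZMod (p ^ k)) - 1, b.2⟩
        invFun := fun y => by
          refine ⟨(?_ : IsUnit (y.1 + 1 - (a : ZMod (p ^ k)))).unit, ?_⟩
          · rw [isUnit_iff hp hk]
            intro hdvd
            have hy : (p : ZMod (p ^ k)) ∣ y.1 := dvd_trans hpj y.2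
            have h5 : y.1 + 1 - (a : ZMod (p ^ k)) - y.1 = 1 - (a : ZMod (p ^ k)) := by
              ring
            exact h (h5 ▸ dvd_sub hdvd hy)
          · rw [IsUnit.unit_spec]
            have h6 : (a : ZMod (p ^ k)) + (y.1 + 1 - (a : ZMod (p ^ k))) - 1 = y.1 := by
              ring
            rw [h6]
            exact y.2
        left_inv := fun b => by
          apply Subtype.ext
          apply Units.ext
          rw [IsUnit.unit_spec]
          ring
        right_inv := fun y => by
          apply Subtype.ext
          show (a : ZMod (p ^ k)) + _ - 1 = y.1
          rw [IsUnit.unit_spec]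
          ring }
    rw [Nat.card_congr e, card_multiples hp hk hj]

lemma card_pairs {j : ℕ} (hj1 : 1 ≤ j) (hj : j ≤ k) :
    Nat.card {ab : (ZMod (p ^ k))ˣ × (ZMod (p ^ k))ˣ //
        (p : ZMod (p ^ k)) ^ j ∣ ((ab.1 : ZMod (p ^ k)) + (ab.2 : ZMod (p ^ k)) - 1)} =
      (Nat.card (ZMod (p ^ k))ˣ - p ^ (k - 1)) * p ^ (k - j) := by
  classical
  haveI := neZero_pk (k := k) hp
  have e := Equiv.subtypeProdEquivSigmaSubtype
    (fun (a b : (ZMod (p ^ k))ˣ) =>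
      (p : ZMod (p ^ k)) ^ j ∣ ((a : ZMod (p ^ k)) + (b : ZMod (p ^ k)) - 1))
  rw [Nat.card_congr e, nat_card_sigma]
  have hterm : ∀ a : (ZMod (p ^ k))ˣ,
      Nat.card {b : (ZMod (p ^ k))ˣ //
        (p : ZMod (p ^ k)) ^ j ∣ ((a : ZMod (p ^ k)) + (b : ZMod (p ^ k)) - 1)} =
      if (p : ZMod (p ^ k)) ∣ (1 - (a : ZMod (p ^ k))) then 0 else p ^ (k - j) :=
    fun a => by convert card_fiber hp hk hj1 hj a
  rw [Finset.sum_congr rfl (fun a _ => hterm a), Finset.sum_ite, Finset.sum_const_zero,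
    Finset.sum_const, zero_add, smul_eq_mul]
  congr 1
  rw [← Fintype.card_subtype, ← Nat.card_eq_fintype_card]
  exact card_good_units hp hk

lemma card_pairs_zero :
    Nat.card {ab : (ZMod (p ^ k))ˣ × (ZMod (p ^ k))ˣ //
        (p : ZMod (p ^ k)) ^ 0 ∣ ((ab.1 : ZMod (p ^ k)) + (ab.2 : ZMod (p ^ k)) - 1)} =
      Nat.card (ZMod (p ^ k))ˣ * Nat.card (ZMod (p ^ k))ˣ := by
  haveI := neZero_pk (k := k) hp
  rw [Nat.card_congr (Equiv.subtypeUnivEquiv (fun ab => by simp)), Nat.card_prod]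

open Classical in
lemma pv_succ_eq_sum (m : ZMod (p ^ k)) :
    pv p k m + 1 = ∑ j ∈ Finset.range (k + 1),
      (if (p : ZMod (p ^ k)) ^ j ∣ m then 1 else 0) := by
  classical
  rw [Finset.sum_boole]
  have hfilter : (Finset.range (k + 1)).filter (fun j => (p : ZMod (p ^ k)) ^ j ∣ m) =
      Finset.range (pv p k m + 1) := by
    ext j
    simp only [Finset.mem_filter, Finset.mem_range]
    constructor
    · rintro ⟨hj, hd⟩
      have := (dvd_iff_le_pv hp (by omega) m).mp hd
      omega
    · intro hj
      have hj' : j ≤ pv p k m := by omega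
      have hjk : j ≤ k := le_trans hj' (pv_le hp m)
      exact ⟨by omega, (dvd_iff_le_pv hp hjk m).mpr hj'⟩
  rw [hfilter, Finset.card_range]
  simp


end count

end MQAux

open MQAux in
/-- For every prime `p` and `k ≥ 1`, the number of medial quasigroups admitting an
affine form over the cyclic group `ℤ_{p^k}`, up to isomorphism, equals
`p^{2k} + p^{2k-2} - p^{k-1} - ∑_{i=k-1}^{2k-1} p^i`. -/
theorem mq_cyclic_p_pow (p k : ℕ) (hp : p.Prime) (hk : 1 ≤ k) :
    (mqG (ZMod (p ^ k)) : ℤ) =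
      (p : ℤ) ^ (2 * k) + (p : ℤ) ^ (2 * k - 2) - (p : ℤ) ^ (k - 1) -
        ∑ i ∈ Finset.Icc (k - 1) (2 * k - 1), (p : ℤ) ^ i := by
  classical
  haveI := neZero_pk (k := k) hp
  set U := Nat.card (ZMod (p ^ k))ˣ with hU
  -- units count
  have hUeq : (U : ℤ) = (p : ℤ) ^ (k - 1) * ((p : ℤ) - 1) := by
    have h1 : U = Fintype.card (ZMod (p ^ k))ˣ := Nat.card_eq_fintype_card
    rw [h1, ZMod.card_units_eq_totient, Nat.totient_prime_pow hp (by omega)]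
    have h2 : 1 ≤ p := hp.pos
    push_cast [Nat.cast_sub h2]
    ring
  have hUle : p ^ (k - 1) ≤ U := by
    have h1 : U = Fintype.card (ZMod (p ^ k))ˣ := Nat.card_eq_fintype_card
    rw [h1, ZMod.card_units_eq_totient, Nat.totient_prime_pow hp (by omega)]
    have h2 : 1 ≤ p - 1 := by have := hp.two_le; omega
    calc p ^ (k - 1) = p ^ (k - 1) * 1 := by ring
      _ ≤ p ^ (k - 1) * (p - 1) := Nat.mul_le_mul_left _ h2
  -- step 1-4 : mqG as a sum of subtype cardinalities
  have step1 : mqG (ZMod (p ^ k)) = ∑ j ∈ Finset.range (k + 1),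
      Nat.card {ab : (ZMod (p ^ k))ˣ × (ZMod (p ^ k))ˣ //
        (p : ZMod (p ^ k)) ^ j ∣ ((ab.1 : ZMod (p ^ k)) + (ab.2 : ZMod (p ^ k)) - 1)} := by
    rw [mqG_eq_sum]
    rw [Finset.sum_congr rfl (fun ab _ => (card_quot_scRel hp _))]
    rw [Finset.sum_congr rfl (fun ab _ => (pv_succ_eq_sum hp hk _))]
    rw [Finset.sum_comm]
    refine Finset.sum_congr rfl (fun j _ => ?_)
    rw [Nat.card_eq_fintype_card, Fintype.card_subtype, Finset.card_filter]
    exact Finset.sum_congr rfl (fun x _ => by congr)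
  -- cast to ℤ
  have step2 : (mqG (ZMod (p ^ k)) : ℤ) =
      (∑ i ∈ Finset.range k, ((U : ℤ) - (p : ℤ) ^ (k - 1)) * (p : ℤ) ^ (k - 1 - i)) +
        (U : ℤ) * (U : ℤ) := by
    rw [step1]
    push_cast
    rw [Finset.sum_range_succ']
    congr 1
    · refine Finset.sum_congr rfl (fun i hi => ?_)
      rw [card_pairs hp hk (by omega) (by {simp only [Finset.mem_range] at hi; omega})]
      have : k - (i + 1) = k - 1 - i := by omega
      rw [this, ← hU]
      push_cast [Nat.cast_sub hUle]
      ring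
    · rw [card_pairs_zero hp hk]
      push_cast
      ring
  rw [step2]
  -- geometric sums
  have hreflect : ∑ i ∈ Finset.range k, ((p : ℤ)) ^ (k - 1 - i) =
      ∑ i ∈ Finset.range k, (p : ℤ) ^ i := Finset.sum_range_reflect (fun i => (p : ℤ) ^ i) k
  rw [← Finset.mul_sum, hreflect]
  -- reindex the RHS sum
  obtain ⟨l, rfl⟩ : ∃ l, k = l + 1 := ⟨k - 1, by omega⟩
  have hIcc : ∑ i ∈ Finset.Icc (l + 1 - 1) (2 * (l + 1) - 1), (p : ℤ) ^ i =
      (p : ℤ) ^ l * ∑ i ∈ Finset.range (l + 2), (p : ℤ) ^ i := by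
    have h1 : (l + 1 - 1) = l := by omega
    have h2 : (2 * (l + 1) - 1) = 2 * l + 1 := by omega
    rw [h1, h2, Finset.mul_sum]
    rw [show Finset.Icc l (2 * l + 1) = Finset.map
      (addLeftEmbedding l) (Finset.range (l + 2)) from ?_]
    · rw [Finset.sum_map]
      refine Finset.sum_congr rfl (fun i _ => ?_)
      show (p : ℤ) ^ (l + i) = (p : ℤ) ^ l * (p : ℤ) ^ i
      rw [pow_add]
    · ext x
      simp only [Finset.mem_Icc, Finset.mem_map, Finset.mem_range, addLeftEmbedding_apply]
      constructor
      · rintro ⟨h1, h2⟩; exact ⟨x - l, by omega, by omega⟩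
      · rintro ⟨y, hy, rfl⟩; omega
  rw [hIcc]
  have hexp1 : 2 * (l + 1) - 2 = 2 * l := by omega
  have hexp2 : (l + 1) - 1 = l := by omega
  rw [hexp1, hexp2, hUeq, hexp2]
  have hgeom : (∑ i ∈ Finset.range (l + 1), (p : ℤ) ^ i) * ((p : ℤ) - 1) =
      (p : ℤ) ^ (l + 1) - 1 := geom_sum_mul (p : ℤ) (l + 1)
  have hsplit : ∑ i ∈ Finset.range (l + 2), (p : ℤ) ^ i =
      (∑ i ∈ Finset.range (l + 1), (p : ℤ) ^ i) + (p : ℤ) ^ (l + 1) :=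
    Finset.sum_range_succ _ _
  rw [hsplit]
  linear_combination ((p : ℤ) ^ l) * hgeom
end

section
/- A medial quasigroup cannot admit affine forms over two non-isomorphic abelian groups; that is, if a quasigroup admits an affine form over an abelian group G and also an affine form over an abelian group H, then G and H are isomorphic. Consequently, for every natural number n, mq(n) = Σ mq(G), where the sum runs over isomorphism class representatives of all abelian groups G of order n. -/
section QIso

variable {Q₁ Q₂ Q₃ : Type*} {op₁ : Q₁ → Q₁ → Q₁} {op₂ : Q₂ → Q₂ → Q₂} {op₃ : Q₃ → Q₃ → Q₃}

lemma qiso_refl (op : Q₁ → Q₁ → Q₁) : QuasigroupIso op op :=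
  ⟨Equiv.refl Q₁, fun _ _ => rfl⟩

lemma qiso_symm (h : QuasigroupIso op₁ op₂) : QuasigroupIso op₂ op₁ := by
  obtain ⟨f, hf⟩ := h
  refine ⟨f.symm, fun x y => ?_⟩
  apply f.injective
  rw [f.apply_symm_apply, hf, f.apply_symm_apply, f.apply_symm_apply]

lemma qiso_trans (h : QuasigroupIso op₁ op₂) (h' : QuasigroupIso op₂ op₃) :
    QuasigroupIso op₁ op₃ := by
  obtain ⟨f, hf⟩ := h
  obtain ⟨g, hg⟩ := h'
  exact ⟨f.trans g, fun x y => by simp only [Equiv.trans_apply, hf, hg]⟩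

lemma qiso_op_eq (f : Q₁ ≃ Q₂) (hf : ∀ x y, f (op₁ x y) = op₂ (f x) (f y)) :
    ∀ a b, op₂ a b = f (op₁ (f.symm a) (f.symm b)) := by
  intro a b
  rw [hf, f.apply_symm_apply, f.apply_symm_apply]

lemma isQuasigroup_of_qiso (h : QuasigroupIso op₁ op₂) (hq : IsQuasigroup op₁) :
    IsQuasigroup op₂ := by
  obtain ⟨f, hf⟩ := h
  have h2 := qiso_op_eq f hf
  constructor
  · intro a
    have : (fun x => op₂ a x) = f ∘ (fun x => op₁ (f.symm a) x) ∘ f.symm := by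
      funext x; simp [h2]
    rw [this]
    exact f.bijective.comp ((hq.1 _).comp f.symm.bijective)
  · intro a
    have : (fun x => op₂ x a) = f ∘ (fun x => op₁ x (f.symm a)) ∘ f.symm := by
      funext x; simp [h2]
    rw [this]
    exact f.bijective.comp ((hq.2 _).comp f.symm.bijective)

lemma isMedial_of_qiso (h : QuasigroupIso op₁ op₂) (hm : IsMedial op₁) :
    IsMedial op₂ := by
  obtain ⟨f, hf⟩ := h
  have h2 := qiso_op_eq f hf
  have h3 : ∀ a b, f.symm (op₂ a b) = op₁ (f.symm a) (f.symm b) := by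
    intro a b; rw [h2, f.symm_apply_apply]
  intro x y u v
  rw [h2 (op₂ x y) (op₂ u v), h2 (op₂ x u) (op₂ y v), h3, h3, h3, h3, hm]

lemma admitsAffineForm_of_qiso {G : Type*} [AddCommGroup G]
    (h : QuasigroupIso op₁ op₂) (ha : AdmitsAffineForm op₁ G) : AdmitsAffineForm op₂ G := by
  obtain ⟨f, hf⟩ := h
  obtain ⟨e, φ, ψ, c, he⟩ := ha
  have h3 : ∀ a b, f.symm (op₂ a b) = op₁ (f.symm a) (f.symm b) := by
    intro a b; rw [qiso_op_eq f hf, f.symm_apply_apply]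
  exact ⟨f.symm.trans e, φ, ψ, c, fun x y => by
    simp only [Equiv.trans_apply]; rw [h3, he]⟩

def transportOp {Q₁ Q₂ : Type*} (f : Q₁ ≃ Q₂) (op : Q₁ → Q₁ → Q₁) : Q₂ → Q₂ → Q₂ :=
  fun a b => f (op (f.symm a) (f.symm b))

lemma qiso_transport (f : Q₁ ≃ Q₂) (op : Q₁ → Q₁ → Q₁) :
    QuasigroupIso op (transportOp f op) :=
  ⟨f, fun x y => by simp [transportOp]⟩

lemma admitsAffineForm_congr {Q G H : Type*} [AddCommGroup G] [AddCommGroup H]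
    (op : Q → Q → Q) (σ : G ≃+ H) (h : AdmitsAffineForm op G) : AdmitsAffineForm op H := by
  obtain ⟨e, φ, ψ, c, he⟩ := h
  refine ⟨e.trans σ.toEquiv, (σ.symm.trans φ).trans σ, (σ.symm.trans ψ).trans σ, σ c,
    fun x y => ?_⟩
  show σ (e (op x y)) = _
  simp only [Equiv.trans_apply, AddEquiv.coe_toEquiv, AddEquiv.trans_apply,
    AddEquiv.symm_apply_apply, AddEquiv.toEquiv_eq_coe, EquivLike.coe_coe, he x y, map_add]

lemma qiso_equivalence {α : Type*} {P : (α → α → α) → Prop} :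
    Equivalence (fun (o₁ o₂ : {op : α → α → α // P op}) => QuasigroupIso o₁.1 o₂.1) :=
  ⟨fun o => qiso_refl o.1, fun h => qiso_symm h, fun h1 h2 => qiso_trans h1 h2⟩

end QIso

section Toyoda

variable {Q : Type*} (op : Q → Q → Q) (hq : IsQuasigroup op) (q0 : Q)

noncomputable def MR : Q ≃ Q := Equiv.ofBijective (fun x => op x q0) (hq.2 q0)
noncomputable def ML : Q ≃ Q := Equiv.ofBijective (fun x => op q0 x) (hq.1 q0)

lemma MR_apply (x : Q) : MR op hq q0 x = op x q0 := rfl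
lemma ML_apply (x : Q) : ML op hq q0 x = op q0 x := rfl
lemma MR_symm (x : Q) : op ((MR op hq q0).symm x) q0 = x := (MR op hq q0).apply_symm_apply x
lemma ML_symm (x : Q) : op q0 ((ML op hq q0).symm x) = x := (ML op hq q0).apply_symm_apply x

noncomputable def Madd (x y : Q) : Q := op ((MR op hq q0).symm x) ((ML op hq q0).symm y)

lemma Mexpand (hm : IsMedial op) (u v : Q) :
    op (Madd op hq q0 u v) (op q0 q0) = op u (op ((ML op hq q0).symm v) q0) := by
  calc op (op ((MR op hq q0).symm u) ((ML op hq q0).symm v)) (op q0 q0)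
      = op (op ((MR op hq q0).symm u) q0) (op ((ML op hq q0).symm v) q0) := hm _ _ _ _
    _ = op u (op ((ML op hq q0).symm v) q0) := by rw [MR_symm op hq q0]

lemma Madd_comm (hm : IsMedial op) (x y : Q) : Madd op hq q0 x y = Madd op hq q0 y x := by
  apply (hq.2 (op q0 q0)).1
  show op (Madd op hq q0 x y) (op q0 q0) = op (Madd op hq q0 y x) (op q0 q0)
  rw [Mexpand op hq q0 hm, Mexpand op hq q0 hm]
  have h := hm q0 ((ML op hq q0).symm x) ((ML op hq q0).symm y) q0
  rw [ML_symm op hq q0, ML_symm op hq q0] at h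
  exact h

lemma Madd_assoc (hm : IsMedial op) (x y z : Q) :
    Madd op hq q0 (Madd op hq q0 x y) z = Madd op hq q0 x (Madd op hq q0 y z) := by
  apply (hq.2 (op q0 q0)).1
  show op (Madd op hq q0 (Madd op hq q0 x y) z) (op q0 q0)
      = op (Madd op hq q0 x (Madd op hq q0 y z)) (op q0 q0)
  have key : op (Madd op hq q0 x (Madd op hq q0 y z)) (op q0 q0)
      = op (Madd op hq q0 (Madd op hq q0 x y) z) (op q0 q0) := by
    calc op (Madd op hq q0 x (Madd op hq q0 y z)) (op q0 q0)
        = op (Madd op hq q0 (Madd op hq q0 y z) x) (op q0 q0) := by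
          rw [Madd_comm op hq q0 hm x (Madd op hq q0 y z)]
      _ = op (Madd op hq q0 y z) (op ((ML op hq q0).symm x) q0) := Mexpand op hq q0 hm _ _
      _ = op (op ((MR op hq q0).symm y) ((ML op hq q0).symm z)) (op ((ML op hq q0).symm x) q0) := rfl
      _ = op (op ((MR op hq q0).symm y) ((ML op hq q0).symm x)) (op ((ML op hq q0).symm z) q0) :=
          hm _ _ _ _
      _ = op (Madd op hq q0 y x) (op ((ML op hq q0).symm z) q0) := rfl
      _ = op (Madd op hq q0 x y) (op ((ML op hq q0).symm z) q0) := by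
          rw [Madd_comm op hq q0 hm y x]
      _ = op (Madd op hq q0 (Madd op hq q0 x y) z) (op q0 q0) := (Mexpand op hq q0 hm _ _).symm
  exact key.symm

lemma Madd_zero_left (y : Q) : Madd op hq q0 (op q0 q0) y = y := by
  unfold Madd
  rw [show (MR op hq q0).symm (op q0 q0) = q0 from (MR op hq q0).symm_apply_apply q0, ML_symm op hq q0]

lemma Madd_zero_right (x : Q) : Madd op hq q0 x (op q0 q0) = x := by
  unfold Madd
  rw [show (ML op hq q0).symm (op q0 q0) = q0 from (ML op hq q0).symm_apply_apply q0, MR_symm op hq q0]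

noncomputable def Mneg (x : Q) : Q :=
  (ML op hq q0) ((Equiv.ofBijective (fun t => op ((MR op hq q0).symm x) t)
    (hq.1 ((MR op hq q0).symm x))).symm (op q0 q0))

lemma Madd_neg (x : Q) : Madd op hq q0 x (Mneg op hq q0 x) = op q0 q0 := by
  unfold Madd Mneg
  rw [Equiv.symm_apply_apply]
  exact (Equiv.ofBijective (fun t => op ((MR op hq q0).symm x) t)
    (hq.1 ((MR op hq q0).symm x))).apply_symm_apply (op q0 q0)

noncomputable def MGroup (hm : IsMedial op) : AddCommGroup Q where
  add := Madd op hq q0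
  add_assoc := Madd_assoc op hq q0 hm
  zero := op q0 q0
  zero_add := Madd_zero_left op hq q0
  add_zero := Madd_zero_right op hq q0
  nsmul := @nsmulRec Q ⟨op q0 q0⟩ ⟨Madd op hq q0⟩
  neg := Mneg op hq q0
  zsmul := @zsmulRec Q ⟨op q0 q0⟩ ⟨Madd op hq q0⟩ ⟨Mneg op hq q0⟩ (@nsmulRec Q ⟨op q0 q0⟩ ⟨Madd op hq q0⟩)
  neg_add_cancel := fun x => by
    show Madd op hq q0 (Mneg op hq q0 x) x = op q0 q0
    rw [Madd_comm op hq q0 hm]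
    exact Madd_neg op hq q0 x
  add_comm := Madd_comm op hq q0 hm

end Toyoda

section ToyodaAffine

variable {Q : Type*} (op : Q → Q → Q) (hq : IsQuasigroup op) (q0 : Q)

lemma MGroup_affine (hm : IsMedial op) : @AdmitsAffineForm Q op Q (MGroup op hq q0 hm) := by
  letI := MGroup op hq q0 hm
  have addeq : ∀ s t : Q, s + t = Madd op hq q0 s t := fun _ _ => rfl
  have op_eq : ∀ s t : Q, op s t = MR op hq q0 s + ML op hq q0 t := by
    intro s t
    rw [addeq]
    unfold Madd
    rw [Equiv.symm_apply_apply, Equiv.symm_apply_apply]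
  have master : ∀ x y u v : Q,
      MR op hq q0 (MR op hq q0 x + ML op hq q0 y) + ML op hq q0 (MR op hq q0 u + ML op hq q0 v)
      = MR op hq q0 (MR op hq q0 x + ML op hq q0 u)
        + ML op hq q0 (MR op hq q0 y + ML op hq q0 v) := by
    intro x y u v
    have h := hm x y u v
    rw [op_eq (op x y) (op u v), op_eq (op x u) (op y v), op_eq x y, op_eq u v,
      op_eq x u, op_eq y v] at h
    exact h
  have hRq0 : MR op hq q0 q0 = (0 : Q) := rfl
  have hLq0 : ML op hq q0 q0 = (0 : Q) := rfl
  have hA : ∀ x y : Q, MR op hq q0 (MR op hq q0 x + ML op hq q0 y) + ML op hq q0 0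
      = MR op hq q0 (MR op hq q0 x) + ML op hq q0 (MR op hq q0 y) := by
    intro x y
    have h := master x y q0 q0
    rw [hRq0, hLq0, add_zero, add_zero, add_zero] at h
    exact h
  have hB : ∀ y : Q, ML op hq q0 (MR op hq q0 y)
      = MR op hq q0 (ML op hq q0 y) + ML op hq q0 0 - MR op hq q0 0 := by
    intro y
    have h := hA q0 y
    rw [hRq0, zero_add] at h
    calc ML op hq q0 (MR op hq q0 y)
        = MR op hq q0 0 + ML op hq q0 (MR op hq q0 y) - MR op hq q0 0 := by abel
      _ = MR op hq q0 (ML op hq q0 y) + ML op hq q0 0 - MR op hq q0 0 := by rw [← h]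
  have hRhom : ∀ s t : Q, MR op hq q0 (s + t) = MR op hq q0 s + MR op hq q0 t - MR op hq q0 0 := by
    intro s t
    have h := hA ((MR op hq q0).symm s) ((ML op hq q0).symm t)
    simp only [Equiv.apply_symm_apply] at h
    rw [hB ((ML op hq q0).symm t)] at h
    simp only [Equiv.apply_symm_apply] at h
    calc MR op hq q0 (s + t) = MR op hq q0 (s + t) + ML op hq q0 0 - ML op hq q0 0 := by abel
      _ = (MR op hq q0 s + (MR op hq q0 t + ML op hq q0 0 - MR op hq q0 0)) - ML op hq q0 0 := by
          rw [h]
      _ = MR op hq q0 s + MR op hq q0 t - MR op hq q0 0 := by abel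
  have hD : ∀ y u v : Q,
      MR op hq q0 (ML op hq q0 y) + ML op hq q0 (MR op hq q0 u + ML op hq q0 v)
      = MR op hq q0 (ML op hq q0 u) + ML op hq q0 (MR op hq q0 y + ML op hq q0 v) := by
    intro y u v
    have h := master q0 y u v
    rw [hRq0, zero_add, zero_add] at h
    exact h
  have hD' : ∀ u v : Q, MR op hq q0 0 + ML op hq q0 (MR op hq q0 u + ML op hq q0 v)
      = MR op hq q0 (ML op hq q0 u) + ML op hq q0 (ML op hq q0 v) := by
    intro u v
    have h := hD q0 u v
    rw [hLq0, hRq0, zero_add] at h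
    exact h
  have hE : ∀ u : Q, MR op hq q0 (ML op hq q0 u)
      = MR op hq q0 0 + ML op hq q0 (MR op hq q0 u) - ML op hq q0 0 := by
    intro u
    have h := hD' u q0
    rw [hLq0, add_zero] at h
    calc MR op hq q0 (ML op hq q0 u)
        = MR op hq q0 (ML op hq q0 u) + ML op hq q0 0 - ML op hq q0 0 := by abel
      _ = MR op hq q0 0 + ML op hq q0 (MR op hq q0 u) - ML op hq q0 0 := by rw [← h]
  have hLhom : ∀ s t : Q, ML op hq q0 (s + t) = ML op hq q0 s + ML op hq q0 t - ML op hq q0 0 := by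
    intro s t
    have h := hD' ((MR op hq q0).symm s) ((ML op hq q0).symm t)
    simp only [Equiv.apply_symm_apply] at h
    rw [hE ((MR op hq q0).symm s)] at h
    simp only [Equiv.apply_symm_apply] at h
    calc ML op hq q0 (s + t) = MR op hq q0 0 + ML op hq q0 (s + t) - MR op hq q0 0 := by abel
      _ = ((MR op hq q0 0 + ML op hq q0 s - ML op hq q0 0) + ML op hq q0 t) - MR op hq q0 0 := by
          rw [h]
      _ = ML op hq q0 s + ML op hq q0 t - ML op hq q0 0 := by abel
  refine ⟨Equiv.refl Q,
    AddEquiv.mk' ((MR op hq q0).trans (Equiv.subRight (MR op hq q0 0))) ?_,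
    AddEquiv.mk' ((ML op hq q0).trans (Equiv.subRight (ML op hq q0 0))) ?_,
    MR op hq q0 0 + ML op hq q0 0, ?_⟩
  · intro s t
    show MR op hq q0 (s + t) - MR op hq q0 0
      = (MR op hq q0 s - MR op hq q0 0) + (MR op hq q0 t - MR op hq q0 0)
    rw [hRhom]; abel
  · intro s t
    show ML op hq q0 (s + t) - ML op hq q0 0
      = (ML op hq q0 s - ML op hq q0 0) + (ML op hq q0 t - ML op hq q0 0)
    rw [hLhom]; abel
  · intro x y
    show op x y = (MR op hq q0 x - MR op hq q0 0) + (ML op hq q0 y - ML op hq q0 0)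
      + (MR op hq q0 0 + ML op hq q0 0)
    rw [op_eq]; abel

lemma toyoda {Q : Type*} [Nonempty Q] (op : Q → Q → Q)
    (hq : IsQuasigroup op) (hm : IsMedial op) :
    ∃ inst : AddCommGroup Q, @AdmitsAffineForm Q op Q inst :=
  ⟨MGroup op hq (Classical.arbitrary Q) hm, MGroup_affine op hq (Classical.arbitrary Q) hm⟩

end ToyodaAffine

section Unique

variable {Q : Type*} (op : Q → Q → Q) (hq : IsQuasigroup op) (q0 : Q)

lemma Madd_affine {G : Type*} [AddCommGroup G] (e : Q ≃ G) (φ ψ : G ≃+ G) (c : G)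
    (he : ∀ x y, e (op x y) = φ (e x) + ψ (e y) + c) (p q : Q) :
    e (Madd op hq q0 p q) = e p + e q - (ψ (e q0) + φ (e q0) + c) := by
  have h1 : φ (e ((MR op hq q0).symm p)) = e p - ψ (e q0) - c := by
    have h := he ((MR op hq q0).symm p) q0
    rw [show op ((MR op hq q0).symm p) q0 = p from (MR op hq q0).apply_symm_apply p] at h
    rw [h]; abel
  have h2 : ψ (e ((ML op hq q0).symm q)) = e q - φ (e q0) - c := by
    have h := he q0 ((ML op hq q0).symm q)
    rw [show op q0 ((ML op hq q0).symm q) = q from (ML op hq q0).apply_symm_apply q] at h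
    rw [h]; abel
  calc e (Madd op hq q0 p q)
      = φ (e ((MR op hq q0).symm p)) + ψ (e ((ML op hq q0).symm q)) + c := he _ _
    _ = e p + e q - (ψ (e q0) + φ (e q0) + c) := by rw [h1, h2]; abel

lemma affine_unique {Q : Type*} {G : Type*} {H : Type*} [AddCommGroup G] [AddCommGroup H]
    (op : Q → Q → Q) (hq : IsQuasigroup op)
    (h1 : AdmitsAffineForm op G) (h2 : AdmitsAffineForm op H) : Nonempty (G ≃+ H) := by
  obtain ⟨e₁, φ₁, ψ₁, c₁, he₁⟩ := h1
  obtain ⟨e₂, φ₂, ψ₂, c₂, he₂⟩ := h2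
  let q0 : Q := e₁.symm 0
  let f₁ : Q ≃ G := e₁.trans (Equiv.subRight (ψ₁ (e₁ q0) + φ₁ (e₁ q0) + c₁))
  let f₂ : Q ≃ H := e₂.trans (Equiv.subRight (ψ₂ (e₂ q0) + φ₂ (e₂ q0) + c₂))
  have hf₁ : ∀ p q, f₁ (Madd op hq q0 p q) = f₁ p + f₁ q := by
    intro p q
    show e₁ (Madd op hq q0 p q) - (ψ₁ (e₁ q0) + φ₁ (e₁ q0) + c₁)
      = (e₁ p - (ψ₁ (e₁ q0) + φ₁ (e₁ q0) + c₁)) + (e₁ q - (ψ₁ (e₁ q0) + φ₁ (e₁ q0) + c₁))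
    rw [Madd_affine op hq q0 e₁ φ₁ ψ₁ c₁ he₁]; abel
  have hf₂ : ∀ p q, f₂ (Madd op hq q0 p q) = f₂ p + f₂ q := by
    intro p q
    show e₂ (Madd op hq q0 p q) - (ψ₂ (e₂ q0) + φ₂ (e₂ q0) + c₂)
      = (e₂ p - (ψ₂ (e₂ q0) + φ₂ (e₂ q0) + c₂)) + (e₂ q - (ψ₂ (e₂ q0) + φ₂ (e₂ q0) + c₂))
    rw [Madd_affine op hq q0 e₂ φ₂ ψ₂ c₂ he₂]; abel
  refine ⟨AddEquiv.mk' (f₁.symm.trans f₂) fun a b => ?_⟩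
  have key : f₁.symm (a + b) = Madd op hq q0 (f₁.symm a) (f₁.symm b) := by
    apply f₁.injective
    rw [f₁.apply_symm_apply, hf₁, f₁.apply_symm_apply, f₁.apply_symm_apply]
  show f₂ (f₁.symm (a + b)) = f₂ (f₁.symm a) + f₂ (f₁.symm b)
  rw [key, hf₂]

end Unique

section Counting

def Fmap {ι α : Type*} {β : ι → Type*} (r : α → α → Prop) (s : ∀ i, β i → β i → Prop)
    (f : ∀ i, β i → α) (hresp : ∀ i b₁ b₂, s i b₁ b₂ → r (f i b₁) (f i b₂)) :
    (Σ i, Quot (s i)) → Quot r :=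
  fun p => Quot.lift (fun b => Quot.mk r (f p.1 b))
    (fun b₁ b₂ h => Quot.sound (hresp _ b₁ b₂ h)) p.2

lemma Fmap_mk {ι α : Type*} {β : ι → Type*} (r : α → α → Prop) (s : ∀ i, β i → β i → Prop)
    (f : ∀ i, β i → α) (hresp : ∀ i b₁ b₂, s i b₁ b₂ → r (f i b₁) (f i b₂))
    (i : ι) (b : β i) :
    Fmap r s f hresp ⟨i, Quot.mk (s i) b⟩ = Quot.mk r (f i b) := rfl

lemma card_quot_sigma {ι : Type*} [Fintype ι] {α : Type*} [Finite α] {β : ι → Type*}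
    [∀ i, Finite (β i)] {r : α → α → Prop} {s : ∀ i, β i → β i → Prop}
    (hrequiv : Equivalence r)
    (f : ∀ i, β i → α)
    (hresp : ∀ i b₁ b₂, s i b₁ b₂ → r (f i b₁) (f i b₂))
    (hsurj : ∀ a, ∃ i b, r (f i b) a)
    (hidx : ∀ i j b₁ b₂, r (f i b₁) (f j b₂) → i = j)
    (hfib : ∀ i b₁ b₂, r (f i b₁) (f i b₂) → s i b₁ b₂) :
    Nat.card (Quot r) = ∑ i, Nat.card (Quot (s i)) := by
  have hbij : Function.Bijective (Fmap r s f hresp) := by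
    constructor
    · rintro ⟨i, q₁⟩ ⟨j, q₂⟩ h
      obtain ⟨b₁, rfl⟩ := Quot.exists_rep q₁
      obtain ⟨b₂, rfl⟩ := Quot.exists_rep q₂
      rw [Fmap_mk, Fmap_mk] at h
      have hr : r (f i b₁) (f j b₂) := hrequiv.eqvGen_iff.mp (Quot.eqvGen_exact h)
      obtain rfl := hidx i j b₁ b₂ hr
      exact congrArg (Sigma.mk i) (Quot.sound (hfib i b₁ b₂ hr))
    · intro qa
      obtain ⟨a, rfl⟩ := Quot.exists_rep qa
      obtain ⟨i, b, hr⟩ := hsurj a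
      exact ⟨⟨i, Quot.mk _ b⟩, by rw [Fmap_mk]; exact Quot.sound hr⟩
  have h1 : Nat.card (Σ i, Quot (s i)) = Nat.card (Quot r) :=
    Nat.card_eq_of_bijective _ hbij
  rw [← h1]
  letI : ∀ i, Fintype (Quot (s i)) := fun i => Fintype.ofFinite _
  rw [Nat.card_eq_fintype_card, Fintype.card_sigma]
  exact Finset.sum_congr rfl fun i _ => (Nat.card_eq_fintype_card).symm

end Counting

/-- A medial quasigroup cannot admit affine forms over two non-isomorphic abelian
groups; consequently, `mq(n)` is the sum of `mq(G)` over isomorphism class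
representatives `G` of the abelian groups of order `n`. -/
theorem mq_sum_over_abelian_groups :
    (∀ (Q G H : Type) [AddCommGroup G] [AddCommGroup H] (op : Q → Q → Q),
      IsQuasigroup op → IsMedial op →
      AdmitsAffineForm op G → AdmitsAffineForm op H → Nonempty (G ≃+ H)) ∧
    (∀ (n : ℕ), 0 < n → ∀ (ι : Type) [Fintype ι] (G : ι → Type) [∀ i, AddCommGroup (G i)],
      (∀ i, Nat.card (G i) = n) →
      (∀ i j : ι, i ≠ j → IsEmpty (G i ≃+ G j)) →
      (∀ (A : Type) [AddCommGroup A], Nat.card A = n → ∃ i : ι, Nonempty (A ≃+ G i)) →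
      mqN n = ∑ i : ι, mqG (G i)) := by
  constructor
  · intro Q G H _ _ op hq _ h1 h2
    exact affine_unique op hq h1 h2
  · intro n hn ι _ G _ hcard hdisj hcompl
    classical
    haveI : ∀ i, Finite (G i) := fun i =>
      Nat.finite_of_card_ne_zero (by rw [hcard i]; omega)
    haveI : Nonempty (Fin n) := ⟨⟨0, hn⟩⟩
    have τ : ∀ i, G i ≃ Fin n := fun i => Finite.equivFinOfCardEq (hcard i)
    have uniq : ∀ (opn : Fin n → Fin n → Fin n), IsQuasigroup opn → ∀ i j,
        AdmitsAffineForm opn (G i) → AdmitsAffineForm opn (G j) → i = j := by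
      intro opn hq2 i j ha1 ha2
      by_contra hij
      exact (hdisj i j hij).false (affine_unique opn hq2 ha1 ha2).some
    unfold mqN mqG
    refine card_quot_sigma (qiso_equivalence)
      (fun i o => ⟨transportOp (τ i) o.1,
        isQuasigroup_of_qiso (qiso_transport (τ i) o.1) o.2.1,
        isMedial_of_qiso (qiso_transport (τ i) o.1) o.2.2.1⟩)
      ?_ ?_ ?_ ?_
    · -- hresp
      intro i b₁ b₂ h
      exact qiso_trans (qiso_symm (qiso_transport (τ i) b₁.1))
        (qiso_trans h (qiso_transport (τ i) b₂.1))
    · -- hsurj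
      intro a
      obtain ⟨opn, hq2, hm2⟩ := a
      obtain ⟨instA, haff⟩ := toyoda opn hq2 hm2
      have hcFin : Nat.card (Fin n) = n := by simp [Nat.card_eq_fintype_card]
      obtain ⟨i, ⟨σ⟩⟩ := hcompl (Fin n) hcFin
      have haffG : AdmitsAffineForm opn (G i) :=
        @admitsAffineForm_congr _ _ _ instA _ opn σ haff
      refine ⟨i, ⟨transportOp (τ i).symm opn,
        isQuasigroup_of_qiso (qiso_transport (τ i).symm opn) hq2,
        isMedial_of_qiso (qiso_transport (τ i).symm opn) hm2,
        admitsAffineForm_of_qiso (qiso_transport (τ i).symm opn) haffG⟩, ?_⟩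
      exact qiso_trans
        (qiso_symm (qiso_transport (τ i) (transportOp (τ i).symm opn)))
        (qiso_symm (qiso_transport (τ i).symm opn))
    · -- hidx
      intro i j b₁ b₂ hr
      refine uniq (transportOp (τ i) b₁.1)
        (isQuasigroup_of_qiso (qiso_transport (τ i) b₁.1) b₁.2.1) i j
        (admitsAffineForm_of_qiso (qiso_transport (τ i) b₁.1) b₁.2.2.2)
        (admitsAffineForm_of_qiso (qiso_symm hr)
          (admitsAffineForm_of_qiso (qiso_transport (τ j) b₂.1) b₂.2.2.2))
    · -- hfib
      intro i b₁ b₂ hr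
      exact qiso_trans (qiso_transport (τ i) b₁.1)
        (qiso_trans hr (qiso_symm (qiso_transport (τ i) b₂.1)))
end
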